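/- arXiv:2508.00231 — 8 statements merged into one kernel-verified Lean document; each statement's English description precedes it below -/
import Mathlib

section
/- Let m ≥ 1, let U ⊆ ℝᵐ be open, let η be a constant symmetric invertible real m × m matrix, and let Ω : U → ℝ be a smooth nowhere-vanishing function. Let g(x) := Ω(x)⁻² η and define the Christoffel symbols Γ^ν_{αβ}(x) := ½ Σ_ρ Ω(x)² (η⁻¹)^{νρ} ( ∂_α g_{ρβ}(x) + ∂_β g_{ρα}(x) − ∂_ρ g_{αβ}(x) ). Let ξ : U → ℝᵐ be a smooth vector field that is null, i.e. Σ_{α,β} η_{αβ} ξ^α(x) ξ^β(x) = 0 for all x ∈ U, and that satisfies the pregeodesic equation Σ_α ξ^α(x) ∂_α ξ^ν(x) + Σ_{α,β} Γ^ν_{αβ}(x) ξ^α(x) ξ^β(x) = −F(x) ξ^ν(x) for all ν, where F(x) := 2 (Σ_α ξ^α(x) ∂_αΩ(x)) / Ω(x). Then Σ_α ξ^α(x) ∂_α ξ^ν(x) = 0 for all x ∈ U and all ν; in particular, the second directional derivative along ξ of every flat coordinate function vanishes: ξ(ξ(x^ν)) = 0. -/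
/-- A null vector field satisfying the pregeodesic equation
`∇_ξ ξ = -Fξ` with `F = 2 dΩ(ξ)/Ω` for the conformally flat metric `g = Ω⁻² η`
annihilates the second directional derivatives of the flat coordinates:
`Σ_α ξ^α ∂_α ξ^ν = 0`. -/
theorem stmt_4 (m : ℕ) (hm : 1 ≤ m) (U : Set (Fin m → ℝ)) (hU : IsOpen U)
    (η : Matrix (Fin m) (Fin m) ℝ) (hsym : η.IsSymm) (hinv : IsUnit η.det)
    (Ω : (Fin m → ℝ) → ℝ) (hΩ : ContDiffOn ℝ (⊤ : ℕ∞) Ω U) (hΩ0 : ∀ x ∈ U, Ω x ≠ 0)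
    (ξ : (Fin m → ℝ) → (Fin m → ℝ)) (hξ : ContDiffOn ℝ (⊤ : ℕ∞) ξ U)
    (g : (Fin m → ℝ) → Matrix (Fin m) (Fin m) ℝ)
    (hg : ∀ x, g x = ((Ω x)^2)⁻¹ • η)
    (Γ : (Fin m → ℝ) → Fin m → Fin m → Fin m → ℝ)
    (hΓ : ∀ x ∈ U, ∀ ν α β : Fin m, Γ x ν α β =
      (1/2) * ∑ ρ : Fin m, (Ω x)^2 * η⁻¹ ν ρ *
        ( fderiv ℝ (fun y => g y ρ β) x (Pi.single α 1)
        + fderiv ℝ (fun y => g y ρ α) x (Pi.single β 1)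
        - fderiv ℝ (fun y => g y α β) x (Pi.single ρ 1) ))
    (F : (Fin m → ℝ) → ℝ)
    (hF : ∀ x ∈ U, F x = 2 * (∑ α : Fin m, ξ x α * fderiv ℝ Ω x (Pi.single α 1)) / Ω x)
    (hnull : ∀ x ∈ U, ∑ α : Fin m, ∑ β : Fin m, η α β * ξ x α * ξ x β = 0)
    (hgeo : ∀ x ∈ U, ∀ ν : Fin m,
      (∑ α : Fin m, ξ x α * fderiv ℝ (fun y => ξ y ν) x (Pi.single α 1))
      + ∑ α : Fin m, ∑ β : Fin m, Γ x ν α β * ξ x α * ξ x β = - F x * ξ x ν) :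
    ∀ x ∈ U, ∀ ν : Fin m,
      ∑ α : Fin m, ξ x α * fderiv ℝ (fun y => ξ y ν) x (Pi.single α 1) = 0 := by
  intro x hx ν
  have hxU : U ∈ nhds x := hU.mem_nhds hx
  have hΩd : DifferentiableAt ℝ Ω x := ((hΩ.contDiffAt hxU).differentiableAt (by simp))
  have hΩx : Ω x ≠ 0 := hΩ0 x hx
  set dΩ : (Fin m → ℝ) →L[ℝ] ℝ := fderiv ℝ Ω x with hdΩ
  -- derivative of the entries of g
  have hkey : ∀ ρ β : Fin m, ∀ v : Fin m → ℝ, fderiv ℝ (fun y => g y ρ β) x v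
      = (-2 * ((Ω x)⁻¹)^3 * dΩ v) * η ρ β := by
    intro ρ β v
    have hsq : HasFDerivAt (fun y => Ω y * Ω y) (Ω x • dΩ + Ω x • dΩ) x :=
      hΩd.hasFDerivAt.mul hΩd.hasFDerivAt
    have hinvd : HasFDerivAt (fun y => (Ω y * Ω y)⁻¹)
        ((-(((Ω x) * (Ω x)) ^ 2)⁻¹) • (Ω x • dΩ + Ω x • dΩ)) x :=
      (hasDerivAt_inv (mul_ne_zero hΩx hΩx)).comp_hasFDerivAt x hsq
    have hmc := hinvd.mul_const (η ρ β)
    have heq : (fun y => g y ρ β) = fun y => (Ω y * Ω y)⁻¹ * η ρ β := by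
      funext y
      rw [hg y]
      simp [pow_two, Matrix.smul_apply, mul_comm]
    rw [heq, hmc.fderiv]
    simp only [ContinuousLinearMap.smul_apply, ContinuousLinearMap.add_apply,
      ContinuousLinearMap.coe_smul', Pi.smul_apply, smul_eq_mul]
    field_simp
    ring
  -- the simplified form of the Christoffel symbols
  have hinvmul : ∀ β : Fin m, (∑ ρ : Fin m, η⁻¹ ν ρ * η ρ β) = (1 : Matrix (Fin m) (Fin m) ℝ) ν β := by
    intro β
    rw [← Matrix.mul_apply, Matrix.nonsing_inv_mul η hinv]
  have hΓ' : ∀ α β : Fin m, Γ x ν α β =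
      -(Ω x)⁻¹ * (dΩ (Pi.single α 1) * (1 : Matrix (Fin m) (Fin m) ℝ) ν β
        + dΩ (Pi.single β 1) * (1 : Matrix (Fin m) (Fin m) ℝ) ν α
        - η α β * ∑ ρ : Fin m, η⁻¹ ν ρ * dΩ (Pi.single ρ 1)) := by
    intro α β
    rw [hΓ x hx ν α β]
    have hterm : ∀ ρ : Fin m, (1/2 : ℝ) * ((Ω x)^2 * η⁻¹ ν ρ *
        ( fderiv ℝ (fun y => g y ρ β) x (Pi.single α 1)
        + fderiv ℝ (fun y => g y ρ α) x (Pi.single β 1)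
        - fderiv ℝ (fun y => g y α β) x (Pi.single ρ 1) ))
      = -(Ω x)⁻¹ * (dΩ (Pi.single α 1) * (η⁻¹ ν ρ * η ρ β)
        + dΩ (Pi.single β 1) * (η⁻¹ ν ρ * η ρ α)
        - η α β * (η⁻¹ ν ρ * dΩ (Pi.single ρ 1))) := by
      intro ρ
      rw [hkey ρ β, hkey ρ α, hkey α β]
      field_simp
      ring
    rw [Finset.mul_sum, Finset.sum_congr rfl (fun ρ _ => hterm ρ)]
    rw [← Finset.mul_sum]
    congr 1
    rw [Finset.sum_sub_distrib, Finset.sum_add_distrib, ← Finset.mul_sum, ← Finset.mul_sum,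
      ← Finset.mul_sum, hinvmul β, hinvmul α]
  -- compute the double sum
  have hone : ∀ (c : Fin m → ℝ), (∑ β : Fin m, (1 : Matrix (Fin m) (Fin m) ℝ) ν β * c β) = c ν := by
    intro c
    simp [Matrix.one_apply]
  set Q : ℝ := ∑ ρ : Fin m, η⁻¹ ν ρ * dΩ (Pi.single ρ 1) with hQ
  set P : ℝ := ∑ α : Fin m, ξ x α * dΩ (Pi.single α 1) with hP
  have hP' : (∑ β : Fin m, dΩ (Pi.single β 1) * ξ x β) = P := by
    rw [hP]
    exact Finset.sum_congr rfl fun β _ => mul_comm _ _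
  have hsum : (∑ α : Fin m, ∑ β : Fin m, Γ x ν α β * ξ x α * ξ x β)
      = -(Ω x)⁻¹ * (P * ξ x ν + ξ x ν * P)
        + (Ω x)⁻¹ * Q * (∑ α : Fin m, ∑ β : Fin m, η α β * ξ x α * ξ x β) := by
    have expand : ∀ α β : Fin m, Γ x ν α β * ξ x α * ξ x β =
        -(Ω x)⁻¹ * ((dΩ (Pi.single α 1) * ξ x α) * ((1 : Matrix (Fin m) (Fin m) ℝ) ν β * ξ x β)
          + ((1 : Matrix (Fin m) (Fin m) ℝ) ν α * ξ x α) * (dΩ (Pi.single β 1) * ξ x β))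
        + (Ω x)⁻¹ * Q * (η α β * ξ x α * ξ x β) := by
      intro α β
      rw [hΓ' α β]
      ring
    rw [Finset.sum_congr rfl fun α _ => Finset.sum_congr rfl fun β _ => expand α β]
    have h1 : ∀ α : Fin m, ∑ β : Fin m,
        (-(Ω x)⁻¹ * ((dΩ (Pi.single α 1) * ξ x α) * ((1 : Matrix (Fin m) (Fin m) ℝ) ν β * ξ x β)
          + ((1 : Matrix (Fin m) (Fin m) ℝ) ν α * ξ x α) * (dΩ (Pi.single β 1) * ξ x β))
        + (Ω x)⁻¹ * Q * (η α β * ξ x α * ξ x β))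
      = -(Ω x)⁻¹ * ((dΩ (Pi.single α 1) * ξ x α) * ξ x ν
          + ((1 : Matrix (Fin m) (Fin m) ℝ) ν α * ξ x α) * P)
        + (Ω x)⁻¹ * Q * (∑ β : Fin m, η α β * ξ x α * ξ x β) := by
      intro α
      rw [Finset.sum_add_distrib, ← Finset.mul_sum, ← Finset.mul_sum,
        Finset.sum_add_distrib, ← Finset.mul_sum, ← Finset.mul_sum,
        hone (fun β => ξ x β), hP']
    rw [Finset.sum_congr rfl fun α _ => h1 α]
    rw [Finset.sum_add_distrib, ← Finset.mul_sum, ← Finset.mul_sum]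
    congr 1
    congr 1
    have hre : ∀ i : Fin m, dΩ (Pi.single i 1) * ξ x i * ξ x ν
        + (1 : Matrix (Fin m) (Fin m) ℝ) ν i * ξ x i * P
      = (ξ x i * dΩ (Pi.single i 1)) * ξ x ν
        + ((1 : Matrix (Fin m) (Fin m) ℝ) ν i * ξ x i) * P := fun i => by ring
    rw [Finset.sum_congr rfl fun i _ => hre i, Finset.sum_add_distrib,
      ← Finset.sum_mul, ← Finset.sum_mul, ← hP, hone (fun i => ξ x i)]
  rw [hnull x hx, mul_zero, add_zero] at hsum
  have hgeox := hgeo x hx ν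
  rw [hsum, hF x hx] at hgeox
  have : -(Ω x)⁻¹ * (P * ξ x ν + ξ x ν * P) = -(2 * P / Ω x) * ξ x ν := by
    field_simp
    ring
  rw [this, ← hP] at hgeox
  linarith [hgeox]
end

section
/- For n ≥ 1, let H : ℝ × ℝⁿ → ℝ be a smooth function (arguments written H(v,z)) with everywhere positive derivative w := ∂_v H > 0. Define q(v,z) ∈ ℝⁿ as the gradient of H in the z-variables, M := ½‖q‖², and the map Ψ : ℝ × ℝ × ℝⁿ → ℝ × ℝ × ℝⁿ, Ψ(u,v,z) := (u/w, H + uM/w, z + u q/w), with w, M, q evaluated at (v,z). Let η be the Minkowski bilinear form on ℝ × ℝ × ℝⁿ, η((δU,δV,δX),(δU',δV',δX')) := −δU δV' − δV δU' + ⟨δX,δX'⟩. Then for every point (u,v,z) and every tangent vector T = (δu,δv,δz) ∈ ℝ × ℝ × ℝⁿ, the pullback of η under Ψ satisfies η( DΨ(u,v,z)·T , DΨ(u,v,z)·T ) = −2 δu δv + ( u² Σ_A Y_A² − 2u P ) δv² + Σ_A ( −4u Y_A + 2u² Σ_I Y_I Y_{IA} ) δv δzᴬ + Σ_{A,B} (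 δ_{AB} − 2u Y_{AB} + u² Σ_I Y_{IA} Y_{IB} ) δzᴬ δzᴮ, where P := −(∂_v∂_v H)/w, Y_A := −(∂_v∂_{zᴬ} H)/w and Y_{AB} := −(∂_{zᴬ}∂_{zᴮ} H)/w, all evaluated at (v,z), DΨ denotes the total (Fréchet) derivative of Ψ, and δ_{AB} is the Kronecker delta. -/
open Finset ContinuousLinearMap

/-- Partial derivative in the `v` (first) direction of a function on `ℝ × ℝⁿ`. -/
noncomputable def Dv {n : ℕ} (H : ℝ × (Fin n → ℝ) → ℝ) (p : ℝ × (Fin n → ℝ)) : ℝ :=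
  fderiv ℝ H p (1, 0)

/-- Partial derivative in the `z^A` direction of a function on `ℝ × ℝⁿ`. -/
noncomputable def Dz {n : ℕ} (A : Fin n) (H : ℝ × (Fin n → ℝ) → ℝ)
    (p : ℝ × (Fin n → ℝ)) : ℝ :=
  fderiv ℝ H p (0, Pi.single A 1)

/-- The Minkowski bilinear form on `ℝ × ℝ × ℝⁿ` in double null coordinates:
`η((δU,δV,δX),(δU',δV',δX')) = -δU δV' - δV δU' + ⟨δX,δX'⟩`. -/
noncomputable def minkEta {n : ℕ} (T T' : ℝ × ℝ × (Fin n → ℝ)) : ℝ :=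
  -(T.1 * T'.2.1) - T.2.1 * T'.1 + ∑ A : Fin n, T.2.2 A * T'.2.2 A

lemma lin_apply {n : ℕ} (L : (ℝ × (Fin n → ℝ)) →L[ℝ] ℝ) (b : ℝ) (c : Fin n → ℝ) :
    L (b, c) = b * L (1, 0) + ∑ A : Fin n, c A * L (0, Pi.single A 1) := by
  have hc : (b, c) = b • ((1:ℝ), (0 : Fin n → ℝ))
      + ∑ A : Fin n, c A • ((0:ℝ), (Pi.single A 1 : Fin n → ℝ)) := by
    rw [Prod.ext_iff]
    refine ⟨by simp [Prod.fst_sum], ?_⟩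
    simp only [Prod.snd_sum, Prod.smul_snd, smul_eq_mul, Prod.snd_add]
    funext j
    simp [Finset.sum_apply, Pi.single_apply, mul_ite]
  rw [hc, map_add, map_smul, map_sum, smul_eq_mul]
  congr 1
  refine Finset.sum_congr rfl fun A _ => ?_
  rw [map_smul, smul_eq_mul]

lemma hasFDerivAt_div'' {E : Type*} [NormedAddCommGroup E] [NormedSpace ℝ E]
    {f g : E → ℝ} {f' g' : E →L[ℝ] ℝ} {x : E}
    (hf : HasFDerivAt f f' x) (hg : HasFDerivAt g g' x) (hx : g x ≠ 0) :
    HasFDerivAt (fun y => f y / g y)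
      (f x • ((-((g x)^2)⁻¹) • g') + (g x)⁻¹ • f') x := by
  have hinv : HasFDerivAt (fun y => (g y)⁻¹) ((-((g x)^2)⁻¹) • g') x :=
    (hasDerivAt_inv hx).comp_hasFDerivAt x hg
  have h := hf.mul hinv
  simp only [div_eq_mul_inv]
  exact h

lemma alg {n : ℕ} (u a b w Pv : ℝ) (hw0 : w ≠ 0) (c q Y : Fin n → ℝ)
    (YM : Fin n → Fin n → ℝ) (hsym : ∀ A B, YM A B = YM B A)
    (s : ℝ) (hs : s = Pv * b + ∑ I, Y I * c I)
    (y : Fin n → ℝ) (hy : ∀ B, y B = Y B * b + ∑ A, YM A B * c A) :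
    -(((a + u*s)/w) * (w*b + (∑ A, q A * c A) + ((a+u*s)/w)*((1/2)*∑ A, (q A)^2)
        - u*(∑ A, q A * y A)))
      - (w*b + (∑ A, q A * c A) + ((a+u*s)/w)*((1/2)*∑ A, (q A)^2)
        - u*(∑ A, q A * y A)) * ((a + u*s)/w)
      + ∑ A, (c A + ((a+u*s)/w)*(q A) - u*(y A))^2
    = -2*a*b + (u^2*(∑ A, (Y A)^2) - 2*u*Pv)*b^2
      + (∑ A, (-4*u*(Y A) + 2*u^2*(∑ I, Y I * YM I A))*b*(c A))
      + ∑ A, ∑ B, ((if A = B then (1:ℝ) else 0) - 2*u*(YM A B)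
          + u^2*(∑ I, YM I A * YM I B))*(c A)*(c B) := by
  subst hs
  set s : ℝ := Pv * b + ∑ I, Y I * c I with hs
  set α : ℝ := (a + u*s)/w with hα
  have hαw : α * w = a + u*s := by rw [hα]; field_simp
  have e1 : (∑ A, (c A + α*(q A) - u*(y A))^2)
      = (∑ A, (c A)^2) + α^2*(∑ A, (q A)^2) + u^2*(∑ A, (y A)^2)
        + 2*α*(∑ A, q A * c A) - 2*u*(∑ A, c A * y A) - 2*α*u*(∑ A, q A * y A) := by
    rw [Finset.sum_congr rfl (fun A _ => show (c A + α*(q A) - u*(y A))^2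
      = (c A)^2 + α^2*(q A)^2 + u^2*(y A)^2 + 2*α*(q A * c A) - 2*u*(c A * y A)
        - 2*α*u*(q A * y A) from by ring)]
    simp only [Finset.sum_add_distrib, Finset.sum_sub_distrib, Finset.mul_sum]
  have S1 : (∑ B, c B * y B) = b*(∑ I, Y I * c I) + ∑ A, ∑ B, YM A B * c A * c B := by
    simp only [hy]
    calc ∑ B, c B * (Y B * b + ∑ A, YM A B * c A)
        = ∑ B, (b*(Y B * c B) + ∑ A, YM A B * c A * c B) := by
          refine Finset.sum_congr rfl fun B _ => ?_
          rw [mul_add, Finset.mul_sum,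
            Finset.sum_congr rfl (fun A _ => show c B * (YM A B * c A)
              = YM A B * c A * c B from by ring)]
          ring
      _ = b*(∑ I, Y I * c I) + ∑ B, ∑ A, YM A B * c A * c B := by
          rw [Finset.sum_add_distrib, Finset.mul_sum]
      _ = b*(∑ I, Y I * c I) + ∑ A, ∑ B, YM A B * c A * c B := by
          congr 1
          exact Finset.sum_comm
  have S2 : (∑ B, (y B)^2)
      = b^2*(∑ I, (Y I)^2) + 2*b*(∑ A, (∑ I, Y I * YM I A) * c A)
        + ∑ A, ∑ B, (∑ I, YM I A * YM I B) * c A * c B := by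
    simp only [hy]
    calc ∑ B, (Y B * b + ∑ A, YM A B * c A)^2
        = ∑ B, (b^2*(Y B)^2 + (2*b)*(Y B * ∑ A, YM A B * c A)
            + (∑ A, YM A B * c A) * (∑ A, YM A B * c A)) := by
          refine Finset.sum_congr rfl fun B _ => ?_
          ring
      _ = b^2*(∑ I, (Y I)^2) + (2*b)*(∑ B, Y B * ∑ A, YM A B * c A)
            + ∑ B, (∑ A, YM A B * c A) * (∑ A, YM A B * c A) := by
          rw [Finset.sum_add_distrib, Finset.sum_add_distrib, Finset.mul_sum, Finset.mul_sum]
      _ = b^2*(∑ I, (Y I)^2) + 2*b*(∑ A, (∑ I, Y I * YM I A) * c A)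
            + ∑ A, ∑ B, (∑ I, YM I A * YM I B) * c A * c B := by
          congr 1
          · congr 1
            congr 1
            calc ∑ B, Y B * ∑ A, YM A B * c A
                = ∑ B, ∑ A, Y B * (YM A B * c A) := by
                  exact Finset.sum_congr rfl fun B _ => Finset.mul_sum _ _ _
              _ = ∑ A, ∑ B, Y B * (YM A B * c A) := Finset.sum_comm
              _ = ∑ A, (∑ I, Y I * YM I A) * c A := by
                  refine Finset.sum_congr rfl fun A _ => ?_
                  rw [Finset.sum_mul]
                  refine Finset.sum_congr rfl fun B _ => ?_
                  rw [hsym A B]; ring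
          · calc ∑ B, (∑ A, YM A B * c A) * (∑ A, YM A B * c A)
                = ∑ B, ∑ A, ∑ C, (YM A B * c A) * (YM C B * c C) := by
                  refine Finset.sum_congr rfl fun B _ => ?_
                  rw [Finset.sum_mul_sum]
              _ = ∑ A, ∑ B, ∑ C, (YM A B * c A) * (YM C B * c C) := Finset.sum_comm
              _ = ∑ A, ∑ C, ∑ B, (YM A B * c A) * (YM C B * c C) := by
                  exact Finset.sum_congr rfl fun A _ => Finset.sum_comm
              _ = ∑ A, ∑ C, (∑ I, YM I A * YM I C) * c A * c C := by
                  refine Finset.sum_congr rfl fun A _ => ?_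
                  refine Finset.sum_congr rfl fun C _ => ?_
                  rw [Finset.sum_mul, Finset.sum_mul]
                  refine Finset.sum_congr rfl fun B _ => ?_
                  rw [hsym A B, hsym C B]; ring
  have S3 : (∑ A, (-4*u*(Y A) + 2*u^2*(∑ I, Y I * YM I A))*b*(c A))
      = -4*u*b*(∑ I, Y I * c I) + 2*u^2*b*(∑ A, (∑ I, Y I * YM I A) * c A) := by
    calc ∑ A, (-4*u*(Y A) + 2*u^2*(∑ I, Y I * YM I A))*b*(c A)
        = ∑ A, ((-4*u*b)*(Y A * c A) + (2*u^2*b)*((∑ I, Y I * YM I A) * c A)) := by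
          exact Finset.sum_congr rfl fun A _ => by ring
      _ = _ := by
          rw [Finset.sum_add_distrib]
          simp only [Finset.mul_sum]
  have S4 : (∑ A, ∑ B, ((if A = B then (1:ℝ) else 0) - 2*u*(YM A B)
          + u^2*(∑ I, YM I A * YM I B))*(c A)*(c B))
      = (∑ A, (c A)^2) - 2*u*(∑ A, ∑ B, YM A B * c A * c B)
        + u^2*(∑ A, ∑ B, (∑ I, YM I A * YM I B) * c A * c B) := by
    calc ∑ A, ∑ B, ((if A = B then (1:ℝ) else 0) - 2*u*(YM A B)
            + u^2*(∑ I, YM I A * YM I B))*(c A)*(c B)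
        = ∑ A, ∑ B, ((if A = B then c A * c B else 0)
            + ((-(2*u))*(YM A B * c A * c B)
              + u^2*((∑ I, YM I A * YM I B) * c A * c B))) := by
          refine Finset.sum_congr rfl fun A _ => Finset.sum_congr rfl fun B _ => ?_
          by_cases h : A = B <;> simp [h] <;> ring
      _ = (∑ A, ∑ B, if A = B then c A * c B else 0)
            + ((-(2*u))*(∑ A, ∑ B, YM A B * c A * c B)
              + u^2*(∑ A, ∑ B, (∑ I, YM I A * YM I B) * c A * c B)) := by
          simp only [Finset.sum_add_distrib, Finset.mul_sum]
      _ = _ := by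
          have : (∑ A, ∑ B, if A = B then c A * c B else 0) = ∑ A : Fin n, (c A)^2 := by
            refine Finset.sum_congr rfl fun A _ => ?_
            rw [Finset.sum_ite_eq]
            simp [pow_two]
          rw [this]; ring
  rw [e1, S1, S2, S3, S4]
  linear_combination (-2*b) * hαw

set_option maxHeartbeats 4000000 in
/-- pullback of the flat Minkowski metric under the coordinate
transformation `Ψ` with general jump function `H` gives the Lipschitz metric
form with coefficients `P = -H_vv/w`, `Y_A = -H_{v z^A}/w`, `Y_{AB} = -H_{z^A z^B}/w`. -/
theorem stmt_5 (n : ℕ) (hn : 1 ≤ n) (H : ℝ × (Fin n → ℝ) → ℝ) (hH : ContDiff ℝ (⊤ : ℕ∞) H)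
    (hw : ∀ p : ℝ × (Fin n → ℝ), 0 < Dv H p)
    (Ψ : ℝ × ℝ × (Fin n → ℝ) → ℝ × ℝ × (Fin n → ℝ))
    (hΨ : ∀ (u v : ℝ) (z : Fin n → ℝ), Ψ (u, v, z) =
      ( u / Dv H (v, z),
        H (v, z) + u * ((1/2) * ∑ A : Fin n, (Dz A H (v, z))^2) / Dv H (v, z),
        fun A => z A + u * Dz A H (v, z) / Dv H (v, z) ))
    (P : ℝ × (Fin n → ℝ) → ℝ)
    (hP : ∀ p, P p = -(Dv (Dv H) p) / Dv H p)
    (YA : Fin n → ℝ × (Fin n → ℝ) → ℝ)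
    (hYA : ∀ A p, YA A p = -(Dv (Dz A H) p) / Dv H p)
    (YAB : Fin n → Fin n → ℝ × (Fin n → ℝ) → ℝ)
    (hYAB : ∀ A B p, YAB A B p = -(Dz A (Dz B H) p) / Dv H p) :
    ∀ (u v : ℝ) (z : Fin n → ℝ) (T : ℝ × ℝ × (Fin n → ℝ)),
      minkEta (fderiv ℝ Ψ (u, v, z) T) (fderiv ℝ Ψ (u, v, z) T) =
        -2 * T.1 * T.2.1
        + (u^2 * (∑ A : Fin n, (YA A (v, z))^2) - 2 * u * P (v, z)) * T.2.1^2
        + (∑ A : Fin n, (-4 * u * YA A (v, z)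
            + 2 * u^2 * ∑ I : Fin n, YA I (v, z) * YAB I A (v, z)) * T.2.1 * T.2.2 A)
        + ∑ A : Fin n, ∑ B : Fin n,
            ((if A = B then (1:ℝ) else 0) - 2 * u * YAB A B (v, z)
              + u^2 * ∑ I : Fin n, YAB I A (v, z) * YAB I B (v, z)) * T.2.2 A * T.2.2 B := by
  intro u v z T
  obtain ⟨a, b, c⟩ := T
  -- basic smoothness facts
  have hH1 : ContDiff ℝ (⊤ : ℕ∞) (fderiv ℝ H) := hH.fderiv_right (by simp)
  have hde : ∀ e : ℝ × (Fin n → ℝ), ContDiff ℝ (⊤ : ℕ∞) (fun p => fderiv ℝ H p e) := fun e =>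
    (ContinuousLinearMap.apply ℝ ℝ e).contDiff.comp hH1
  have eDv : Dv H = fun p => fderiv ℝ H p ((1:ℝ), (0 : Fin n → ℝ)) := rfl
  have eDz : ∀ A : Fin n, Dz A H
      = fun p => fderiv ℝ H p ((0:ℝ), (Pi.single A 1 : Fin n → ℝ)) := fun A => rfl
  have hDv : ContDiff ℝ (⊤ : ℕ∞) (Dv H) := hde _
  have hDz : ∀ A, ContDiff ℝ (⊤ : ℕ∞) (Dz A H) := fun A => hde _
  have hw0 : Dv H (v, z) ≠ 0 := ne_of_gt (hw (v, z))
  have hmix : ∀ e e' : ℝ × (Fin n → ℝ),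
      fderiv ℝ (fun p => fderiv ℝ H p e) (v, z) e' = fderiv ℝ (fderiv ℝ H) (v, z) e' e := by
    intro e e'
    have h := fderiv_clm_apply (𝕜 := ℝ) (c := fderiv ℝ H) (u := fun _ => e)
      (hH1.differentiable (by simp) (v, z)) (differentiableAt_const e)
    rw [show (fun p => fderiv ℝ H p e) = (fun y => (fderiv ℝ H y) ((fun _ => e) y)) from rfl, h]
    simp
  have hsymS : ∀ e e' : ℝ × (Fin n → ℝ),
      fderiv ℝ (fderiv ℝ H) (v, z) e e' = fderiv ℝ (fderiv ℝ H) (v, z) e' e := fun e e' =>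
    second_derivative_symmetric (fun y => (hH.differentiable (by simp) y).hasFDerivAt)
      ((hH1.differentiable (by simp) (v, z)).hasFDerivAt) e e'
  -- values of the second derivatives
  have hWd10 : fderiv ℝ (Dv H) (v, z) (1, 0) = -(P (v, z)) * Dv H (v, z) := by
    have e : Dv (Dv H) (v, z) = fderiv ℝ (Dv H) (v, z) (1, 0) := rfl
    rw [← e, hP]
    field_simp
  have hWdA : ∀ A, fderiv ℝ (Dv H) (v, z) (0, Pi.single A 1)
      = -(YA A (v, z)) * Dv H (v, z) := by
    intro A
    have e1 : fderiv ℝ (Dv H) (v, z) (0, Pi.single A 1)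
        = fderiv ℝ (fderiv ℝ H) (v, z) ((0:ℝ), (Pi.single A 1 : Fin n → ℝ))
            ((1:ℝ), (0 : Fin n → ℝ)) := by
      rw [eDv]; exact hmix _ _
    have e2 : Dv (Dz A H) (v, z)
        = fderiv ℝ (fderiv ℝ H) (v, z) ((1:ℝ), (0 : Fin n → ℝ))
            ((0:ℝ), (Pi.single A 1 : Fin n → ℝ)) := by
      rw [show Dv (Dz A H) (v, z)
          = fderiv ℝ (Dz A H) (v, z) ((1:ℝ), (0 : Fin n → ℝ)) from rfl, eDz A]
      exact hmix _ _
    rw [e1, hsymS, ← e2, hYA]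
    field_simp
  have hq1 : ∀ B, fderiv ℝ (Dz B H) (v, z) (1, 0) = -(YA B (v, z)) * Dv H (v, z) := by
    intro B
    have e : Dv (Dz B H) (v, z) = fderiv ℝ (Dz B H) (v, z) (1, 0) := rfl
    rw [← e, hYA]
    field_simp
  have hq2 : ∀ B A, fderiv ℝ (Dz B H) (v, z) (0, Pi.single A 1)
      = -(YAB A B (v, z)) * Dv H (v, z) := by
    intro B A
    have e : Dz A (Dz B H) (v, z) = fderiv ℝ (Dz B H) (v, z) (0, Pi.single A 1) := rfl
    rw [← e, hYAB]
    field_simp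
  have hsymYM : ∀ A B, YAB A B (v, z) = YAB B A (v, z) := by
    intro A B
    rw [hYAB, hYAB]
    have e1 : Dz A (Dz B H) (v, z)
        = fderiv ℝ (fderiv ℝ H) (v, z) ((0:ℝ), (Pi.single A 1 : Fin n → ℝ))
            ((0:ℝ), (Pi.single B 1 : Fin n → ℝ)) := by
      rw [show Dz A (Dz B H) (v, z)
          = fderiv ℝ (Dz B H) (v, z) ((0:ℝ), (Pi.single A 1 : Fin n → ℝ)) from rfl, eDz B]
      exact hmix _ _
    have e2 : Dz B (Dz A H) (v, z)
        = fderiv ℝ (fderiv ℝ H) (v, z) ((0:ℝ), (Pi.single B 1 : Fin n → ℝ))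
            ((0:ℝ), (Pi.single A 1 : Fin n → ℝ)) := by
      rw [show Dz B (Dz A H) (v, z)
          = fderiv ℝ (Dz A H) (v, z) ((0:ℝ), (Pi.single B 1 : Fin n → ℝ)) from rfl, eDz A]
      exact hmix _ _
    rw [e1, hsymS, ← e2]
  -- abbreviations
  set s : ℝ := P (v, z) * b + ∑ I, YA I (v, z) * c I with hsdef
  set yf : Fin n → ℝ := fun B => YA B (v, z) * b + ∑ A, YAB A B (v, z) * c A with hyf
  have hyfB : ∀ B, yf B = YA B (v, z) * b + ∑ A, YAB A B (v, z) * c A := fun B => by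
    rw [hyf]
  -- directional values
  have hWbc : fderiv ℝ (Dv H) (v, z) (b, c) = -(Dv H (v, z) * s) := by
    rw [lin_apply, hWd10,
      Finset.sum_congr rfl (fun A _ => show c A * fderiv ℝ (Dv H) (v, z) (0, Pi.single A 1)
        = (-(Dv H (v, z))) * (YA A (v, z) * c A) from by rw [hWdA A]; ring),
      ← Finset.mul_sum, hsdef]
    ring
  have hqbc : ∀ B, fderiv ℝ (Dz B H) (v, z) (b, c) = -(Dv H (v, z) * yf B) := by
    intro B
    rw [lin_apply, hq1 B,
      Finset.sum_congr rfl (fun A _ => show c A * fderiv ℝ (Dz B H) (v, z) (0, Pi.single A 1)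
        = (-(Dv H (v, z))) * (YAB A B (v, z) * c A) from by rw [hq2 B A]; ring),
      ← Finset.mul_sum, hyfB B]
    ring
  have hHbc : fderiv ℝ H (v, z) (b, c) = Dv H (v, z) * b + ∑ A, Dz A H (v, z) * c A := by
    have eh1 : Dv H (v, z) = fderiv ℝ H (v, z) (1, 0) := rfl
    have eh2 : ∀ A : Fin n, Dz A H (v, z) = fderiv ℝ H (v, z) (0, Pi.single A 1) :=
      fun A => rfl
    rw [lin_apply, ← eh1,
      Finset.sum_congr rfl (fun A _ => show c A * fderiv ℝ H (v, z) (0, Pi.single A 1)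
        = Dz A H (v, z) * c A from by rw [← eh2 A]; ring)]
    ring
  -- the explicit form of Ψ
  have hΨeq : Ψ = fun p : ℝ × ℝ × (Fin n → ℝ) =>
      ( p.1 / Dv H p.2,
        H p.2 + p.1 * ((1/2) * ∑ A : Fin n, (Dz A H p.2)^2) / Dv H p.2,
        fun A => p.2.2 A + p.1 * Dz A H p.2 / Dv H p.2 ) := by
    funext p
    obtain ⟨u', v', z'⟩ := p
    exact hΨ u' v' z'
  -- HasFDerivAt of the pieces
  have hwc : HasFDerivAt (fun p : ℝ × ℝ × (Fin n → ℝ) => Dv H p.2)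
      ((fderiv ℝ (Dv H) (v, z)).comp (ContinuousLinearMap.snd ℝ ℝ (ℝ × (Fin n → ℝ))))
      (u, v, z) :=
    ((hDv.differentiable (by simp) (v, z)).hasFDerivAt).comp (g := Dv H) (u, v, z) hasFDerivAt_snd
  have hqc : ∀ B, HasFDerivAt (fun p : ℝ × ℝ × (Fin n → ℝ) => Dz B H p.2)
      ((fderiv ℝ (Dz B H) (v, z)).comp (ContinuousLinearMap.snd ℝ ℝ (ℝ × (Fin n → ℝ))))
      (u, v, z) := fun B =>
    (((hDz B).differentiable (by simp) (v, z)).hasFDerivAt).comp (g := Dz B H) (u, v, z) hasFDerivAt_snd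
  have hHc : HasFDerivAt (fun p : ℝ × ℝ × (Fin n → ℝ) => H p.2)
      ((fderiv ℝ H (v, z)).comp (ContinuousLinearMap.snd ℝ ℝ (ℝ × (Fin n → ℝ))))
      (u, v, z) :=
    ((hH.differentiable (by simp) (v, z)).hasFDerivAt).comp (u, v, z) hasFDerivAt_snd
  have h1 : HasFDerivAt (fun p : ℝ × ℝ × (Fin n → ℝ) => p.1 / Dv H p.2)
      (u • ((-((Dv H (v, z))^2)⁻¹) •
          ((fderiv ℝ (Dv H) (v, z)).comp (ContinuousLinearMap.snd ℝ ℝ (ℝ × (Fin n → ℝ)))))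
        + (Dv H (v, z))⁻¹ • (ContinuousLinearMap.fst ℝ ℝ (ℝ × (Fin n → ℝ))))
      (u, v, z) :=
    hasFDerivAt_div'' hasFDerivAt_fst hwc hw0
  have hsq : ∀ B, HasFDerivAt (fun p : ℝ × ℝ × (Fin n → ℝ) => (Dz B H p.2)^2)
      ((Dz B H (v, z)) •
          ((fderiv ℝ (Dz B H) (v, z)).comp (ContinuousLinearMap.snd ℝ ℝ (ℝ × (Fin n → ℝ))))
        + (Dz B H (v, z)) •
          ((fderiv ℝ (Dz B H) (v, z)).comp (ContinuousLinearMap.snd ℝ ℝ (ℝ × (Fin n → ℝ)))))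
      (u, v, z) := by
    intro B
    have heq : (fun p : ℝ × ℝ × (Fin n → ℝ) => (Dz B H p.2)^2)
        = fun p : ℝ × ℝ × (Fin n → ℝ) => Dz B H p.2 * Dz B H p.2 := by
      funext p; rw [pow_two]
    rw [heq]
    exact (hqc B).mul (hqc B)
  have hMc : HasFDerivAt (fun p : ℝ × ℝ × (Fin n → ℝ) =>
        (1/2 : ℝ) * ∑ A : Fin n, (Dz A H p.2)^2)
      ((1/2 : ℝ) • ∑ B : Fin n, ((Dz B H (v, z)) •
          ((fderiv ℝ (Dz B H) (v, z)).comp (ContinuousLinearMap.snd ℝ ℝ (ℝ × (Fin n → ℝ))))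
        + (Dz B H (v, z)) •
          ((fderiv ℝ (Dz B H) (v, z)).comp (ContinuousLinearMap.snd ℝ ℝ (ℝ × (Fin n → ℝ))))))
      (u, v, z) :=
    (HasFDerivAt.fun_sum (fun B _ => hsq B)).const_mul _
  have h2 : HasFDerivAt (fun p : ℝ × ℝ × (Fin n → ℝ) =>
        H p.2 + p.1 * ((1/2) * ∑ A : Fin n, (Dz A H p.2)^2) / Dv H p.2)
      (((fderiv ℝ H (v, z)).comp (ContinuousLinearMap.snd ℝ ℝ (ℝ × (Fin n → ℝ))))
        + ((u * ((1/2) * ∑ A : Fin n, (Dz A H (v, z))^2)) • ((-((Dv H (v, z))^2)⁻¹) •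
            ((fderiv ℝ (Dv H) (v, z)).comp (ContinuousLinearMap.snd ℝ ℝ (ℝ × (Fin n → ℝ)))))
          + (Dv H (v, z))⁻¹ •
            (u • ((1/2 : ℝ) • ∑ B : Fin n, ((Dz B H (v, z)) •
                ((fderiv ℝ (Dz B H) (v, z)).comp
                  (ContinuousLinearMap.snd ℝ ℝ (ℝ × (Fin n → ℝ))))
              + (Dz B H (v, z)) •
                ((fderiv ℝ (Dz B H) (v, z)).comp
                  (ContinuousLinearMap.snd ℝ ℝ (ℝ × (Fin n → ℝ))))))
              + ((1/2) * ∑ A : Fin n, (Dz A H (v, z))^2) •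
                (ContinuousLinearMap.fst ℝ ℝ (ℝ × (Fin n → ℝ))))))
      (u, v, z) :=
    hHc.add (hasFDerivAt_div'' (hasFDerivAt_fst.mul hMc) hwc hw0)
  have h3 : ∀ B, HasFDerivAt (fun p : ℝ × ℝ × (Fin n → ℝ) =>
        p.2.2 B + p.1 * Dz B H p.2 / Dv H p.2)
      (((ContinuousLinearMap.proj B).comp
          ((ContinuousLinearMap.snd ℝ ℝ (Fin n → ℝ)).comp
            (ContinuousLinearMap.snd ℝ ℝ (ℝ × (Fin n → ℝ)))))
        + ((u * Dz B H (v, z)) • ((-((Dv H (v, z))^2)⁻¹) •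
            ((fderiv ℝ (Dv H) (v, z)).comp (ContinuousLinearMap.snd ℝ ℝ (ℝ × (Fin n → ℝ)))))
          + (Dv H (v, z))⁻¹ •
            (u • ((fderiv ℝ (Dz B H) (v, z)).comp
                (ContinuousLinearMap.snd ℝ ℝ (ℝ × (Fin n → ℝ))))
              + (Dz B H (v, z)) • (ContinuousLinearMap.fst ℝ ℝ (ℝ × (Fin n → ℝ))))))
      (u, v, z) := fun B =>
    (((ContinuousLinearMap.proj B).comp
        ((ContinuousLinearMap.snd ℝ ℝ (Fin n → ℝ)).comp
          (ContinuousLinearMap.snd ℝ ℝ (ℝ × (Fin n → ℝ))))).hasFDerivAt).add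
      (hasFDerivAt_div'' (hasFDerivAt_fst.mul (hqc B)) hwc hw0)
  have h3pi : HasFDerivAt (fun (p : ℝ × ℝ × (Fin n → ℝ)) (B : Fin n) =>
        p.2.2 B + p.1 * Dz B H p.2 / Dv H p.2)
      (ContinuousLinearMap.pi (fun B =>
        (((ContinuousLinearMap.proj B).comp
            ((ContinuousLinearMap.snd ℝ ℝ (Fin n → ℝ)).comp
              (ContinuousLinearMap.snd ℝ ℝ (ℝ × (Fin n → ℝ)))))
          + ((u * Dz B H (v, z)) • ((-((Dv H (v, z))^2)⁻¹) •
              ((fderiv ℝ (Dv H) (v, z)).comp (ContinuousLinearMap.snd ℝ ℝ (ℝ × (Fin n → ℝ)))))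
            + (Dv H (v, z))⁻¹ •
              (u • ((fderiv ℝ (Dz B H) (v, z)).comp
                  (ContinuousLinearMap.snd ℝ ℝ (ℝ × (Fin n → ℝ))))
                + (Dz B H (v, z)) • (ContinuousLinearMap.fst ℝ ℝ (ℝ × (Fin n → ℝ))))))))
      (u, v, z) :=
    hasFDerivAt_pi.2 h3
  have hΨder := HasFDerivAt.prodMk h1 (HasFDerivAt.prodMk h2 h3pi)
  -- evaluate the derivative on the tangent vector
  have hDT : fderiv ℝ Ψ (u, v, z) (a, b, c) =
      ( (a + u*s)/Dv H (v, z),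
        Dv H (v, z)*b + (∑ A, Dz A H (v, z) * c A)
          + ((a + u*s)/Dv H (v, z))*((1/2)*∑ A, (Dz A H (v, z))^2)
          - u*(∑ A, Dz A H (v, z) * yf A),
        fun A => c A + ((a + u*s)/Dv H (v, z))*(Dz A H (v, z)) - u*(yf A) ) := by
    rw [hΨeq, hΨder.fderiv]
    refine Prod.ext ?_ (Prod.ext ?_ ?_)
    · simp only [ContinuousLinearMap.prod_apply, ContinuousLinearMap.add_apply,
        ContinuousLinearMap.smul_apply, ContinuousLinearMap.comp_apply,
        ContinuousLinearMap.coe_fst', ContinuousLinearMap.coe_snd', smul_eq_mul]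
      rw [hWbc]
      field_simp
      ring
    · simp only [ContinuousLinearMap.prod_apply, ContinuousLinearMap.add_apply,
        ContinuousLinearMap.smul_apply, ContinuousLinearMap.comp_apply,
        ContinuousLinearMap.coe_fst', ContinuousLinearMap.coe_snd',
        ContinuousLinearMap.sum_apply, smul_eq_mul]
      rw [hWbc, hHbc]
      rw [Finset.sum_congr rfl (fun B _ => show
          Dz B H (v, z) * fderiv ℝ (Dz B H) (v, z) (b, c)
            + Dz B H (v, z) * fderiv ℝ (Dz B H) (v, z) (b, c)
          = (-(2 * Dv H (v, z))) * (Dz B H (v, z) * yf B) from by rw [hqbc B]; ring),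
        ← Finset.mul_sum]
      field_simp
      ring
    · funext A
      simp only [ContinuousLinearMap.prod_apply, ContinuousLinearMap.pi_apply,
        ContinuousLinearMap.add_apply, ContinuousLinearMap.smul_apply,
        ContinuousLinearMap.comp_apply, ContinuousLinearMap.coe_fst',
        ContinuousLinearMap.coe_snd', ContinuousLinearMap.proj_apply, smul_eq_mul]
      rw [hWbc, hqbc A]
      field_simp
      ring
  rw [hDT]
  simp only [minkEta]
  rw [show (∑ A : Fin n, (c A + ((a + u*s)/Dv H (v, z))*(Dz A H (v, z)) - u*(yf A))
        * (c A + ((a + u*s)/Dv H (v, z))*(Dz A H (v, z)) - u*(yf A)))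
      = ∑ A : Fin n, (c A + ((a + u*s)/Dv H (v, z))*(Dz A H (v, z)) - u*(yf A))^2 from
    Finset.sum_congr rfl fun A _ => (pow_two _).symm]
  exact alg u a b (Dv H (v, z)) (P (v, z)) hw0 c (fun A => Dz A H (v, z))
    (fun A => YA A (v, z)) (fun A B => YAB A B (v, z)) hsymYM s hsdef yf hyfB
end

section
/- For n ≥ 1, let a > 0 be a real constant and ℋ : ℝⁿ → ℝ a smooth function, and set H(v,z) := a v + ℋ(z), so ∂_v H = a > 0. With q(v,z) the z-gradient of H (that is, q = ∇ℋ), M := ½‖q‖², define Ψ : ℝ × ℝ × ℝⁿ → ℝ × ℝ × ℝⁿ by Ψ(u,v,z) := (u/a, H(v,z) + uM/a, z + u q/a), and let η be the Minkowski bilinear form on ℝ × ℝ × ℝⁿ, η((δU,δV,δX),(δU',δV',δX')) := −δU δV' − δV δU' + ⟨δX,δX'⟩. Then for every (u,v,z) and every T = (δu,δv,δz) ∈ ℝ × ℝ × ℝⁿ: η( DΨ(u,v,z)·T , DΨ(u,v,z)·T ) = −2 δu δv + Σ_{A,B} ( δ_{AB} + (2u/a)( ℋ_{AB} + (u/(2a))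 Σ_I ℋ_{IA} ℋ_{IB} ) ) δzᴬ δzᴮ, where ℋ_{AB} := ∂_{zᴬ}∂_{zᴮ}ℋ(z) is the Hessian of ℋ and δ_{AB} the Kronecker delta. -/
/-- Partial derivative of a function on `ℝⁿ` in the `z^A` direction. -/
noncomputable def DzH {n : ℕ} (A : Fin n) (f : (Fin n → ℝ) → ℝ) (z : Fin n → ℝ) : ℝ :=
  fderiv ℝ f z (Pi.single A 1)

/-- Auxiliary: the function `M = ½ |∇ℋ|²`. -/
noncomputable def Mfun {n : ℕ} (ℋ : (Fin n → ℝ) → ℝ) : (Fin n → ℝ) → ℝ :=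
  fun y => (1/2 : ℝ) * ∑ A : Fin n, (DzH A ℋ y)^2

lemma fderiv_pt_sum {n : ℕ} (f : (Fin n → ℝ) → ℝ) (z w : Fin n → ℝ) :
    fderiv ℝ f z w = ∑ A : Fin n, w A * DzH A f z := by
  have hw : w = ∑ A : Fin n, w A • (Pi.single A (1:ℝ) : Fin n → ℝ) := by
    funext j
    simp [Pi.single_apply]
  conv_lhs => rw [hw]
  rw [map_sum]
  simp [DzH]

lemma DzH_contDiff {n : ℕ} (f : (Fin n → ℝ) → ℝ) (hf : ContDiff ℝ (⊤ : ℕ∞) f) (A : Fin n) :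
    ContDiff ℝ (⊤ : ℕ∞) (DzH A f) :=
  (hf.fderiv_right (by simp)).clm_apply contDiff_const

lemma DzH_eq {n : ℕ} (f : (Fin n → ℝ) → ℝ) (A : Fin n) :
    DzH A f = fun y => fderiv ℝ f y (Pi.single A 1) := rfl

lemma DzH_symm {n : ℕ} (f : (Fin n → ℝ) → ℝ) (hf : ContDiff ℝ (⊤ : ℕ∞) f) (A B : Fin n)
    (z : Fin n → ℝ) : DzH A (DzH B f) z = DzH B (DzH A f) z := by
  have hsym : IsSymmSndFDerivAt ℝ f z := by
    apply ContDiffAt.isSymmSndFDerivAt hf.contDiffAt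
    exact (by rw [minSmoothness_of_isRCLikeNormedField]; exact WithTop.coe_le_coe.mpr le_top)
  have key : ∀ C D : Fin n, DzH C (DzH D f) z
      = fderiv ℝ (fderiv ℝ f) z (Pi.single C 1) (Pi.single D 1) := by
    intro C D
    have hdf : HasFDerivAt (fderiv ℝ f) (fderiv ℝ (fderiv ℝ f) z) z :=
      (((hf.fderiv_right (m := 1) (by exact WithTop.coe_le_coe.mpr le_top)).differentiable (by simp)) z).hasFDerivAt
    have h2 : HasFDerivAt (fun y => fderiv ℝ f y (Pi.single D 1))
        ((ContinuousLinearMap.apply ℝ ℝ (Pi.single D (1:ℝ))).comp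
          (fderiv ℝ (fderiv ℝ f) z)) z := by
      exact ((ContinuousLinearMap.apply ℝ ℝ (Pi.single D (1:ℝ))
        : ((Fin n → ℝ) →L[ℝ] ℝ) →L[ℝ] ℝ).hasFDerivAt (x := fderiv ℝ f z)).comp z hdf
    rw [DzH, DzH_eq f D, h2.fderiv]
    rfl
  rw [key A B, key B A, hsym.eq]

lemma final_algebra (n : ℕ) (a s t u : ℝ) (ha' : a ≠ 0) (w q : Fin n → ℝ)
    (h : Fin n → Fin n → ℝ) (hsym : ∀ A B, h A B = h B A) :
    -(a⁻¹ * s * (a * t + (∑ A : Fin n, w A * q A)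
        + a⁻¹ * (u * (∑ x : Fin n, q x * ∑ A : Fin n, w A * h A x)
          + (1/2 * ∑ A : Fin n, (q A)^2) * s)))
      - (a * t + (∑ A : Fin n, w A * q A)
        + a⁻¹ * (u * (∑ x : Fin n, q x * ∑ A : Fin n, w A * h A x)
          + (1/2 * ∑ A : Fin n, (q A)^2) * s)) * (a⁻¹ * s)
      + ∑ x : Fin n, (w x + a⁻¹ * (u * (∑ A : Fin n, w A * h A x) + q x * s))
          * (w x + a⁻¹ * (u * (∑ A : Fin n, w A * h A x) + q x * s))
    = -2 * s * t + ∑ x : Fin n, ∑ y : Fin n,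
        ((if x = y then (1:ℝ) else 0)
          + 2 * u / a * (h x y + u / (2 * a) * ∑ I : Fin n, h I x * h I y)) * w x * w y := by
  obtain ⟨G, hG⟩ : ∃ G : Fin n → ℝ, ∀ x, G x = ∑ A : Fin n, w A * h A x :=
    ⟨_, fun _ => rfl⟩
  simp only [← hG]
  have key1 : ∑ x : Fin n, (w x + a⁻¹ * (u * G x + q x * s)) * (w x + a⁻¹ * (u * G x + q x * s))
      = (∑ x : Fin n, w x * w x) + (2*s/a) * (∑ x : Fin n, w x * q x)
        + (2*u/a) * (∑ x : Fin n, w x * G x)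
        + (s/a)^2 * (∑ x : Fin n, (q x)^2) + (u/a)^2 * (∑ x : Fin n, G x * G x)
        + (2*u*s/a^2) * (∑ x : Fin n, q x * G x) := by
    simp only [Finset.mul_sum, ← Finset.sum_add_distrib]
    refine Finset.sum_congr rfl fun x _ => ?_
    field_simp
    ring
  have perm : ∀ F : Fin n → Fin n → Fin n → ℝ,
      ∑ x : Fin n, ∑ y : Fin n, ∑ I : Fin n, F x y I
        = ∑ I : Fin n, ∑ x : Fin n, ∑ y : Fin n, F x y I := by
    intro F
    calc ∑ x : Fin n, ∑ y : Fin n, ∑ I : Fin n, F x y I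
        = ∑ x : Fin n, ∑ I : Fin n, ∑ y : Fin n, F x y I :=
          Finset.sum_congr rfl fun x _ => Finset.sum_comm
      _ = ∑ I : Fin n, ∑ x : Fin n, ∑ y : Fin n, F x y I := Finset.sum_comm
  have e1 : ∀ x y : Fin n,
      ((if x = y then (1:ℝ) else 0)
          + 2 * u / a * (h x y + u / (2 * a) * ∑ I : Fin n, h I x * h I y)) * w x * w y
      = (if x = y then w x * w y else 0) + (2*u/a) * (h x y * (w x * w y))
        + ∑ I : Fin n, (u/a)^2 * ((h I x * w x) * (h I y * w y)) := by
    intro x y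
    have hs : ∑ I : Fin n, (u/a)^2 * ((h I x * w x) * (h I y * w y))
        = (u/a)^2 * ((∑ I : Fin n, h I x * h I y) * (w x * w y)) := by
      simp only [Finset.sum_mul, Finset.mul_sum]
      exact Finset.sum_congr rfl fun I _ => by ring
    rw [hs]
    by_cases hxy : x = y <;> simp only [hxy, if_true, if_false, reduceIte] <;> field_simp <;> ring
  have key2 : ∑ x : Fin n, ∑ y : Fin n,
      ((if x = y then (1:ℝ) else 0)
        + 2 * u / a * (h x y + u / (2 * a) * ∑ I : Fin n, h I x * h I y)) * w x * w y
      = (∑ x : Fin n, w x * w x) + (2*u/a) * (∑ x : Fin n, w x * G x)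
        + (u/a)^2 * (∑ x : Fin n, G x * G x) := by
    have t1 : ∑ x : Fin n, ∑ y : Fin n, (if x = y then w x * w y else 0)
        = ∑ x : Fin n, w x * w x := by
      refine Finset.sum_congr rfl fun x _ => ?_
      simp [Finset.sum_ite_eq]
    have t2 : ∑ x : Fin n, ∑ y : Fin n, (2*u/a) * (h x y * (w x * w y))
        = (2*u/a) * (∑ x : Fin n, w x * G x) := by
      rw [Finset.mul_sum]
      refine Finset.sum_congr rfl fun x _ => ?_
      rw [hG x]
      simp only [Finset.mul_sum]
      refine Finset.sum_congr rfl fun y _ => ?_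
      rw [hsym x y]
      ring
    have t3 : ∑ x : Fin n, ∑ y : Fin n, ∑ I : Fin n, (u/a)^2 * ((h I x * w x) * (h I y * w y))
        = (u/a)^2 * (∑ x : Fin n, G x * G x) := by
      rw [perm, Finset.mul_sum]
      refine Finset.sum_congr rfl fun I _ => ?_
      rw [hG I, Finset.sum_mul_sum]
      simp only [Finset.mul_sum]
      refine Finset.sum_congr rfl fun A _ => ?_
      refine Finset.sum_congr rfl fun B _ => ?_
      rw [hsym A I, hsym B I]
      ring
    calc ∑ x : Fin n, ∑ y : Fin n,
        ((if x = y then (1:ℝ) else 0)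
          + 2 * u / a * (h x y + u / (2 * a) * ∑ I : Fin n, h I x * h I y)) * w x * w y
        = ∑ x : Fin n, ∑ y : Fin n, ((if x = y then w x * w y else 0)
            + (2*u/a) * (h x y * (w x * w y))
            + ∑ I : Fin n, (u/a)^2 * ((h I x * w x) * (h I y * w y))) :=
          Finset.sum_congr rfl fun x _ => Finset.sum_congr rfl fun y _ => e1 x y
      _ = (∑ x : Fin n, ∑ y : Fin n, (if x = y then w x * w y else 0))
            + (∑ x : Fin n, ∑ y : Fin n, (2*u/a) * (h x y * (w x * w y)))
            + ∑ x : Fin n, ∑ y : Fin n, ∑ I : Fin n, (u/a)^2 * ((h I x * w x) * (h I y * w y)) := by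
          simp only [Finset.sum_add_distrib]
      _ = (∑ x : Fin n, w x * w x) + (2*u/a) * (∑ x : Fin n, w x * G x)
            + (u/a)^2 * (∑ x : Fin n, G x * G x) := by rw [t1, t2, t3]
  rw [key1, key2]
  field_simp
  ring

/-- for the purely gravitational / null-dust jump function
`H(v,z) = a v + ℋ(z)`, the pullback of the flat metric under the cut-and-paste
transformation takes the Rosen-type form. -/
theorem stmt_6 (n : ℕ) (hn : 1 ≤ n) (a : ℝ) (ha : 0 < a)
    (ℋ : (Fin n → ℝ) → ℝ) (hℋ : ContDiff ℝ (⊤ : ℕ∞) ℋ)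
    (Ψ : ℝ × ℝ × (Fin n → ℝ) → ℝ × ℝ × (Fin n → ℝ))
    (hΨ : ∀ (u v : ℝ) (z : Fin n → ℝ), Ψ (u, v, z) =
      ( u / a,
        (a * v + ℋ z) + u * ((1/2) * ∑ A : Fin n, (DzH A ℋ z)^2) / a,
        fun A => z A + u * DzH A ℋ z / a )) :
    ∀ (u v : ℝ) (z : Fin n → ℝ) (T : ℝ × ℝ × (Fin n → ℝ)),
      minkEta (fderiv ℝ Ψ (u, v, z) T) (fderiv ℝ Ψ (u, v, z) T) =
        -2 * T.1 * T.2.1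
        + ∑ A : Fin n, ∑ B : Fin n,
            ((if A = B then (1:ℝ) else 0)
              + (2 * u / a) * (DzH A (DzH B ℋ) z
                + (u / (2 * a)) * ∑ I : Fin n, DzH I (DzH A ℋ) z * DzH I (DzH B ℋ) z))
            * T.2.2 A * T.2.2 B := by
  intro u v z T
  obtain ⟨s, t, w⟩ := T
  have ha' : a ≠ 0 := ne_of_gt ha
  have hΨ' : Ψ = fun p : ℝ × ℝ × (Fin n → ℝ) =>
      ( p.1 / a,
        (a * p.2.1 + ℋ p.2.2) + p.1 * Mfun ℋ p.2.2 / a,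
        fun A => p.2.2 A + p.1 * DzH A ℋ p.2.2 / a ) := by
    funext p
    rw [show p = (p.1, p.2.1, p.2.2) from rfl, hΨ p.1 p.2.1 p.2.2]
    rfl
  have hP1 : HasFDerivAt (fun p : ℝ × ℝ × (Fin n → ℝ) => p.1)
      (ContinuousLinearMap.fst ℝ ℝ (ℝ × (Fin n → ℝ))) (u, v, z) := hasFDerivAt_fst
  have hP2 : HasFDerivAt (fun p : ℝ × ℝ × (Fin n → ℝ) => p.2.1)
      ((ContinuousLinearMap.fst ℝ ℝ (Fin n → ℝ)).comp
        (ContinuousLinearMap.snd ℝ ℝ (ℝ × (Fin n → ℝ)))) (u, v, z) :=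
    hasFDerivAt_fst.comp (u, v, z) hasFDerivAt_snd
  have hP3 : HasFDerivAt (fun p : ℝ × ℝ × (Fin n → ℝ) => p.2.2)
      ((ContinuousLinearMap.snd ℝ ℝ (Fin n → ℝ)).comp
        (ContinuousLinearMap.snd ℝ ℝ (ℝ × (Fin n → ℝ)))) (u, v, z) :=
    hasFDerivAt_snd.comp (u, v, z) hasFDerivAt_snd
  have hHz : HasFDerivAt ℋ (fderiv ℝ ℋ z) z := (hℋ.differentiable (by simp) z).hasFDerivAt
  have hMcd : ContDiff ℝ (⊤ : ℕ∞) (Mfun ℋ) :=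
    contDiff_const.mul (ContDiff.sum fun A _ => (DzH_contDiff ℋ hℋ A).pow 2)
  have hMz : HasFDerivAt (Mfun ℋ) (fderiv ℝ (Mfun ℋ) z) z :=
    (hMcd.differentiable (by simp) z).hasFDerivAt
  have hqz : ∀ A : Fin n, HasFDerivAt (DzH A ℋ) (fderiv ℝ (DzH A ℋ) z) z := fun A =>
    ((DzH_contDiff ℋ hℋ A).differentiable (by simp) z).hasFDerivAt
  have h1 : HasFDerivAt (fun p : ℝ × ℝ × (Fin n → ℝ) => p.1 / a)
      (a⁻¹ • ContinuousLinearMap.fst ℝ ℝ (ℝ × (Fin n → ℝ))) (u, v, z) := by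
    simpa [div_eq_inv_mul] using hP1.const_mul a⁻¹
  have h2 : HasFDerivAt
      (fun p : ℝ × ℝ × (Fin n → ℝ) => (a * p.2.1 + ℋ p.2.2) + p.1 * Mfun ℋ p.2.2 / a)
      ((a • ((ContinuousLinearMap.fst ℝ ℝ (Fin n → ℝ)).comp
          (ContinuousLinearMap.snd ℝ ℝ (ℝ × (Fin n → ℝ))))
        + (fderiv ℝ ℋ z).comp ((ContinuousLinearMap.snd ℝ ℝ (Fin n → ℝ)).comp
          (ContinuousLinearMap.snd ℝ ℝ (ℝ × (Fin n → ℝ)))))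
        + a⁻¹ • (u • ((fderiv ℝ (Mfun ℋ) z).comp
            ((ContinuousLinearMap.snd ℝ ℝ (Fin n → ℝ)).comp
              (ContinuousLinearMap.snd ℝ ℝ (ℝ × (Fin n → ℝ)))))
          + Mfun ℋ z • ContinuousLinearMap.fst ℝ ℝ (ℝ × (Fin n → ℝ)))) (u, v, z) := by
    refine HasFDerivAt.add (HasFDerivAt.add (hP2.const_mul a) (hHz.comp (u, v, z) hP3)) ?_
    simpa [div_eq_inv_mul] using (hP1.mul (hMz.comp (u, v, z) hP3)).const_mul a⁻¹
  have h3 : HasFDerivAt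
      (fun p : ℝ × ℝ × (Fin n → ℝ) => fun A : Fin n => p.2.2 A + p.1 * DzH A ℋ p.2.2 / a)
      (ContinuousLinearMap.pi (fun A : Fin n =>
        (ContinuousLinearMap.proj A).comp
          ((ContinuousLinearMap.snd ℝ ℝ (Fin n → ℝ)).comp
            (ContinuousLinearMap.snd ℝ ℝ (ℝ × (Fin n → ℝ))))
        + a⁻¹ • (u • ((fderiv ℝ (DzH A ℋ) z).comp
            ((ContinuousLinearMap.snd ℝ ℝ (Fin n → ℝ)).comp
              (ContinuousLinearMap.snd ℝ ℝ (ℝ × (Fin n → ℝ)))))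
          + DzH A ℋ z • ContinuousLinearMap.fst ℝ ℝ (ℝ × (Fin n → ℝ))))) (u, v, z) := by
    refine hasFDerivAt_pi.2 fun A => ?_
    refine HasFDerivAt.add (by have := (hasFDerivAt_apply (𝕜 := ℝ) A z).comp (u, v, z) hP3; exact this) ?_
    simpa [div_eq_inv_mul] using (hP1.mul ((hqz A).comp (u, v, z) hP3)).const_mul a⁻¹
  have hΨd := (h1.prodMk (h2.prodMk h3)).fderiv
  rw [hΨ', hΨd]
  simp only [ContinuousLinearMap.prod_apply, ContinuousLinearMap.add_apply,
    ContinuousLinearMap.coe_smul', Pi.smul_apply, ContinuousLinearMap.comp_apply,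
    ContinuousLinearMap.coe_fst', ContinuousLinearMap.coe_snd',
    ContinuousLinearMap.proj_apply, ContinuousLinearMap.pi_apply, smul_eq_mul, minkEta]
  have hMder : HasFDerivAt (Mfun ℋ)
      ((1/2:ℝ) • ∑ A : Fin n, (DzH A ℋ z • fderiv ℝ (DzH A ℋ) z
        + DzH A ℋ z • fderiv ℝ (DzH A ℋ) z)) z := by
    have hA : ∀ A : Fin n, HasFDerivAt (fun y => (DzH A ℋ y)^2)
        (DzH A ℋ z • fderiv ℝ (DzH A ℋ) z + DzH A ℋ z • fderiv ℝ (DzH A ℋ) z) z := fun A => by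
      have := (hqz A).mul (hqz A); simp only [pow_two]; exact this
    have := (HasFDerivAt.sum fun A (_ : A ∈ Finset.univ) => hA A).const_mul (1/2); simp only [Finset.sum_apply] at this; exact this
  have hMw : fderiv ℝ (Mfun ℋ) z w = ∑ A : Fin n, DzH A ℋ z * (fderiv ℝ (DzH A ℋ) z w) := by
    rw [hMder.fderiv]
    simp only [ContinuousLinearMap.coe_smul', Pi.smul_apply, ContinuousLinearMap.sum_apply,
      ContinuousLinearMap.add_apply, smul_eq_mul]
    rw [Finset.mul_sum]
    exact Finset.sum_congr rfl fun A _ => by ring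
  rw [hMw]
  simp only [Mfun]
  simp only [fderiv_pt_sum]
  exact final_algebra n a s t u ha' w (fun A => DzH A ℋ z)
    (fun A B => DzH A (DzH B ℋ) z) (fun A B => DzH_symm ℋ hℋ A B z)
end

section
/- Let ρ : ℝ → ℝ be a smooth function with compact support contained in [−1,1] and ∫ρ = 1, and for ε ∈ (0,1] set ρ_ε(x) := ε⁻¹ρ(x/ε) and θ_ε(x) := ∫_{−1}^{x/ε} ρ(y) dy. Then for every continuous compactly supported function φ : ℝ → ℝ, the integrals ∫_ℝ θ_ε(x) ρ_ε(x) φ(x) dx converge to φ(0)/2 as ε → 0. In distributional language, the regularization (model) product of the Heaviside function θ with the Dirac delta δ equals ½δ, independently of the chosen mollifier ρ. -/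
open Topology Filter MeasureTheory intervalIntegral

/-- the regularization (model) product of the Heaviside function
with the Dirac delta equals `½δ`: for every mollifier `ρ` supported in `[-1,1]`
with `∫ρ = 1`, and every continuous compactly supported `φ`,
`∫ θ_ε ρ_ε φ → φ(0)/2` as `ε → 0⁺`. -/
theorem stmt_10 (ρ : ℝ → ℝ) (hρ : ContDiff ℝ (⊤ : ℕ∞) ρ)
    (hsupp : ∀ x : ℝ, x ∉ Set.Icc (-1 : ℝ) 1 → ρ x = 0)
    (hint : ∫ x : ℝ, ρ x = 1)
    (φ : ℝ → ℝ) (hφ : Continuous φ) (hφc : HasCompactSupport φ) :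
    Tendsto (fun ε : ℝ =>
        ∫ x : ℝ, (∫ y in (-1 : ℝ)..(x / ε), ρ y) * (ε⁻¹ * ρ (x / ε)) * φ x)
      (𝓝[>] (0 : ℝ)) (𝓝 (φ 0 / 2)) := by
  set θ : ℝ → ℝ := fun u => ∫ y in (-1 : ℝ)..u, ρ y with hθdef
  have hρc : Continuous ρ := hρ.continuous
  have hρK : HasCompactSupport ρ := HasCompactSupport.intro isCompact_Icc hsupp
  have hθc : Continuous θ :=
    intervalIntegral.continuous_primitive (fun a b => hρc.intervalIntegrable a b) (-1)
  -- value of θ at 1 is 1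
  have hθ1 : θ 1 = 1 := by
    have : ∫ y in Set.Icc (-1 : ℝ) 1, ρ y = ∫ y, ρ y :=
      setIntegral_eq_integral_of_forall_compl_eq_zero (fun x hx => hsupp x hx)
    have h2 : θ 1 = ∫ y in Set.Icc (-1 : ℝ) 1, ρ y := by
      rw [hθdef]
      simp only
      rw [intervalIntegral.integral_of_le (by norm_num : (-1:ℝ) ≤ 1),
        integral_Icc_eq_integral_Ioc]
    rw [h2, this, hint]
  have hθm1 : θ (-1) = 0 := intervalIntegral.integral_same
  -- derivative of θ
  have hθd : ∀ u : ℝ, HasDerivAt θ (ρ u) u := fun u =>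
    intervalIntegral.integral_hasDerivAt_right (hρc.intervalIntegrable _ _)
      (hρc.stronglyMeasurableAtFilter _ _) hρc.continuousAt
  -- ∫ θ ρ = 1/2
  have hhalf : ∫ u : ℝ, θ u * ρ u = 1 / 2 := by
    have hsub : ∀ x : ℝ, x ∉ Set.Icc (-1 : ℝ) 1 → θ x * ρ x = 0 := fun x hx => by
      rw [hsupp x hx, mul_zero]
    have h1 : ∫ u : ℝ, θ u * ρ u = ∫ u in Set.Icc (-1 : ℝ) 1, θ u * ρ u :=
      (setIntegral_eq_integral_of_forall_compl_eq_zero hsub).symm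
    have h2 : ∫ u in Set.Icc (-1 : ℝ) 1, θ u * ρ u = ∫ u in (-1 : ℝ)..1, θ u * ρ u := by
      rw [intervalIntegral.integral_of_le (by norm_num : (-1:ℝ) ≤ 1),
        integral_Icc_eq_integral_Ioc]
    have hF : ∀ u ∈ Set.uIcc (-1 : ℝ) 1, HasDerivAt (fun u => θ u ^ 2 / 2) (θ u * ρ u) u := by
      intro u _
      have := ((hθd u).pow 2).div_const 2
      refine this.congr_deriv ?_
      ring
    have h3 : ∫ u in (-1 : ℝ)..1, θ u * ρ u = θ 1 ^ 2 / 2 - θ (-1) ^ 2 / 2 :=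
      intervalIntegral.integral_eq_sub_of_hasDerivAt hF
        ((hθc.mul hρc).intervalIntegrable _ _)
    rw [h1, h2, h3, hθ1, hθm1]
    norm_num
  -- the rescaled form
  have key : ∀ ε : ℝ, 0 < ε →
      (∫ x : ℝ, (∫ y in (-1 : ℝ)..(x / ε), ρ y) * (ε⁻¹ * ρ (x / ε)) * φ x)
        = ∫ u : ℝ, θ u * ρ u * φ (ε * u) := by
    intro ε hε
    have h1 : (∫ x : ℝ, (∫ y in (-1 : ℝ)..(x / ε), ρ y) * (ε⁻¹ * ρ (x / ε)) * φ x)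
        = ∫ x : ℝ, ε⁻¹ • (θ (x / ε) * ρ (x / ε) * φ (ε * (x / ε))) := by
      congr 1; ext x
      rw [mul_div_cancel₀ _ hε.ne']
      simp [smul_eq_mul]; ring
    rw [h1, MeasureTheory.integral_smul, MeasureTheory.Measure.integral_comp_div
      (fun u => θ u * ρ u * φ (ε * u)) ε, abs_of_pos hε, smul_smul,
      inv_mul_cancel₀ hε.ne', one_smul]
  -- convergence by dominated convergence
  obtain ⟨C, hC⟩ := hφc.exists_bound_of_continuous hφ
  have hlim : Tendsto (fun ε : ℝ => ∫ u : ℝ, θ u * ρ u * φ (ε * u))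
      (𝓝[>] (0 : ℝ)) (𝓝 (φ 0 / 2)) := by
    have hint' : Integrable (fun u : ℝ => |θ u * ρ u| * C) := by
      apply Integrable.mul_const
      exact ((hθc.mul hρc).abs).integrable_of_hasCompactSupport
        ((hρK.mul_left).abs)
    have := MeasureTheory.tendsto_integral_filter_of_dominated_convergence
      (μ := (volume : Measure ℝ)) (F := fun (ε : ℝ) (u : ℝ) => θ u * ρ u * φ (ε * u))
      (f := fun u => θ u * ρ u * φ 0) (l := 𝓝[>] (0:ℝ))
      (fun u : ℝ => |θ u * ρ u| * C)
      (Eventually.of_forall fun ε =>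
        ((hθc.mul hρc).mul (hφ.comp (continuous_const.mul continuous_id))).aestronglyMeasurable)
      (Eventually.of_forall fun ε => Eventually.of_forall fun u => by
        rw [norm_mul]
        exact mul_le_mul_of_nonneg_left (hC _) (abs_nonneg _))
      hint'
      (Eventually.of_forall fun u => by
        have h0 : Tendsto (fun ε : ℝ => ε * u) (𝓝[>] (0:ℝ)) (𝓝 0) := by
          have h1 : Tendsto (fun ε : ℝ => ε * u) (𝓝 (0:ℝ)) (𝓝 (0 * u)) :=
            (continuous_id.mul (continuous_const (y := u))).tendsto (0 : ℝ)
          simpa using h1.mono_left nhdsWithin_le_nhds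
        exact (tendsto_const_nhds.mul ((hφ.tendsto 0).comp h0)))
    have heq : (∫ u : ℝ, θ u * ρ u * φ 0) = φ 0 / 2 := by
      rw [MeasureTheory.integral_mul_const, hhalf]; ring
    rwa [heq] at this
  refine hlim.congr' ?_
  filter_upwards [self_mem_nhdsWithin] with ε (hε : 0 < ε)
  exact (key ε hε).symm
end

section
/- Let a, b, c be real constants with b ≥ 2c, c ≥ 0 and a > b + c. Then for all v ∈ ℝ and all r ≥ 0: a − b·tanh(v) + 2·c·v·tanh(r)·exp(−v²) > 0. -/
/-!
Since `|tanh| < 1` and `b ≥ 0`, the term `b tanh v` is at most `b`. The Gaussian term is at most `c`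
in absolute value because `2|v| ≤ 1 + v² ≤ e^{v²}`, i.e. `|v| e^{-v²} ≤ 1/2`. Hence the expression
exceeds `a - b - c > 0`.
-/

open Real

theorem abs_mul_exp_neg_sq_le_half (v : ℝ) : |v| * exp (-v ^ 2) ≤ 1 / 2 := by
  have h_two_abs : 2 * |v| ≤ exp (v ^ 2) := by
    nlinarith [add_one_le_exp (v ^ 2), sq_abs v, sq_nonneg (|v| - 1)]
  rw [exp_neg, ← div_eq_mul_inv, div_le_iff₀ (exp_pos _)]
  linarith

theorem abs_two_mul_mul_tanh_mul_exp_neg_sq_le {c : ℝ} (hc : 0 ≤ c) (v r : ℝ) :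
    |2 * c * v * tanh r * exp (-v ^ 2)| ≤ c := by
  calc |2 * c * v * tanh r * exp (-v ^ 2)|
      = 2 * c * |tanh r| * (|v| * exp (-v ^ 2)) := by
        simp only [abs_mul, abs_of_nonneg hc, abs_two, abs_of_pos (exp_pos _)]
        ring
    _ ≤ 2 * c * 1 * (1 / 2) := by
        gcongr
        · exact (abs_tanh_lt_one r).le
        · exact abs_mul_exp_neg_sq_le_half v
    _ = c := by ring

/-- positivity of `∂_v H` for the example jump function:
if `b ≥ 2c`, `c ≥ 0`, `a > b + c`, then
`a - b tanh v + 2cv tanh r e^{-v²} > 0` for all `v ∈ ℝ`, `r ≥ 0`. -/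
theorem stmt_12 (a b c : ℝ) (h1 : 2 * c ≤ b) (h2 : 0 ≤ c) (h3 : b + c < a) :
    ∀ v r : ℝ, 0 ≤ r →
      0 < a - b * Real.tanh v + 2 * c * v * Real.tanh r * Real.exp (-v^2) := by
  intro v r _
  have h_tanh : b * tanh v ≤ b := mul_le_of_le_one_right (by linarith) (tanh_lt_one v).le
  have h_gauss := (abs_le.mp (abs_two_mul_mul_tanh_mul_exp_neg_sq_le h2 v r)).1
  linarith
end

section
/- Let a, b, c be real constants with b ≥ 2c, c ≥ 0 and a > b + c. Then for all v ∈ ℝ and all r ≥ 0 the pressure of the shell is nonnegative: p(v,r) := ( b/cosh²(v) + 2c·tanh(r)·e^{−v²}·(2v² − 1) ) / D(v,r) ≥ 0, where D(v,r) := a − b tanh(v) + 2 c v tanh(r) e^{−v²} (which is positive under the stated hypotheses). -/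
/-!
Put `t = tanh r ∈ [0, 1]`. The Gaussian factor controls everything: from `2|v| ≤ 1 + v² ≤ e^{v²}`
the term `2cvt e^{-v²}` is at least `-c`, so the denominator is at least `a - b - c > 0`; and from
`cosh v ≤ e^{v²/2}` the numerator is at least `b/cosh² v - 2c e^{-v²} ≥ (b - 2c) e^{-v²} ≥ 0`.
-/

open Real

lemma Real.tanh_nonneg {x : ℝ} (hx : 0 ≤ x) : 0 ≤ tanh x := by
  rw [tanh_eq_sinh_div_cosh]
  exact div_nonneg (sinh_nonneg_iff.mpr hx) (cosh_pos x).le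

lemma Real.two_mul_abs_mul_exp_neg_sq_le_one (x : ℝ) : 2 * |x| * exp (-x ^ 2) ≤ 1 := by
  have h : 2 * |x| ≤ exp (x ^ 2) := calc
    2 * |x| ≤ x ^ 2 + 1 := by nlinarith [sq_abs x, sq_nonneg (|x| - 1)]
    _ ≤ exp (x ^ 2) := add_one_le_exp _
  rw [exp_neg, ← div_eq_mul_inv, div_le_one (exp_pos _)]
  exact h

lemma Real.exp_neg_sq_le_inv_cosh_sq (x : ℝ) : exp (-x ^ 2) ≤ 1 / cosh x ^ 2 := by
  have h : cosh x ^ 2 ≤ exp (x ^ 2) := calc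
    cosh x ^ 2 ≤ exp (x ^ 2 / 2) ^ 2 := by gcongr; exact cosh_le_exp_half_sq x
    _ = exp (x ^ 2) := by rw [← exp_nat_mul]; ring_nf
  rw [exp_neg, ← one_div]
  exact one_div_le_one_div_of_le (by positivity) h

section ShellPressure

variable {a b c t : ℝ}

lemma shell_denominator_pos (hb : 0 ≤ b) (hc : 0 ≤ c) (habc : b + c < a) (ht₀ : 0 ≤ t)
    (ht₁ : t ≤ 1) (v : ℝ) : 0 < a - b * tanh v + 2 * c * v * t * exp (-v ^ 2) := by
  have hbv : b * tanh v ≤ b := mul_le_of_le_one_right hb (tanh_lt_one v).le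
  have hgauss : |2 * v * t * exp (-v ^ 2)| ≤ 1 := calc
    |2 * v * t * exp (-v ^ 2)| = 2 * |v| * exp (-v ^ 2) * t := by
      rw [abs_mul, abs_mul, abs_mul, abs_two, abs_of_nonneg ht₀, abs_of_pos (exp_pos _)]; ring
    _ ≤ 2 * |v| * exp (-v ^ 2) * 1 := by gcongr
    _ ≤ 1 := by rw [mul_one]; exact two_mul_abs_mul_exp_neg_sq_le_one v
  have hcv : -c ≤ c * (2 * v * t * exp (-v ^ 2)) := by
    nlinarith [mul_le_mul_of_nonneg_left (neg_abs_le (2 * v * t * exp (-v ^ 2))) hc]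
  linarith

lemma shell_numerator_nonneg (hbc : 2 * c ≤ b) (hc : 0 ≤ c) (ht₀ : 0 ≤ t) (ht₁ : t ≤ 1)
    (v : ℝ) : 0 ≤ b / cosh v ^ 2 + 2 * c * t * exp (-v ^ 2) * (2 * v ^ 2 - 1) := by
  have hexp := exp_pos (-v ^ 2)
  have hcosh : b * exp (-v ^ 2) ≤ b / cosh v ^ 2 := by
    rw [div_eq_mul_one_div]
    exact mul_le_mul_of_nonneg_left (exp_neg_sq_le_inv_cosh_sq v) (by linarith)
  have hlower : -(2 * c * exp (-v ^ 2)) ≤ 2 * c * t * exp (-v ^ 2) * (2 * v ^ 2 - 1) := by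
    have h2c : 0 ≤ 2 * c * exp (-v ^ 2) := by positivity
    nlinarith [mul_nonneg h2c (mul_nonneg ht₀ (sq_nonneg v)), mul_nonneg h2c (sub_nonneg.mpr ht₁)]
  linarith [mul_le_mul_of_nonneg_right hbc hexp.le]

end ShellPressure

/-- nonnegativity of the pressure of the example shell:
if `b ≥ 2c`, `c ≥ 0`, `a > b + c`, then for all `v ∈ ℝ`, `r ≥ 0`,
`p(v,r) = (b/cosh² v + 2c tanh r e^{-v²}(2v² - 1)) / D(v,r) ≥ 0`, where
`D(v,r) = a - b tanh v + 2cv tanh r e^{-v²}`. -/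
theorem stmt_13 (a b c : ℝ) (h1 : 2 * c ≤ b) (h2 : 0 ≤ c) (h3 : b + c < a) :
    ∀ v r : ℝ, 0 ≤ r →
      0 ≤ (b / Real.cosh v ^ 2 + 2 * c * Real.tanh r * Real.exp (-v^2) * (2 * v^2 - 1)) /
        (a - b * Real.tanh v + 2 * c * v * Real.tanh r * Real.exp (-v^2)) := by
  intro v r hr
  have ht₀ := tanh_nonneg hr
  have ht₁ := (tanh_lt_one r).le
  exact div_nonneg (shell_numerator_nonneg h1 h2 ht₀ ht₁ v)
    (shell_denominator_pos (by linarith) h2 h3 ht₀ ht₁ v).le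
end

section
/- Let a, b, c, ℋ₀ be real constants with b ≥ 2c, c ≥ 0, ℋ₀ ≥ c and a > b + c, and define erf(r) := (2/√π)∫₀^r e^{−t²} dt. Then for all v ∈ ℝ and all r > 0 the energy density of the shell is nonnegative: ρ(v,r) := ( c·e^{−v²}·cosh⁻²(r)·(1/r − 2·tanh(r)) + ℋ₀·( erf(r) + (r·e^{−r²}/√π)·(5/2 − r²) ) ) / D(v,r) ≥ 0, where D(v,r) := a − b tanh(v) + 2 c v tanh(r) e^{−v²} (which is positive under the stated hypotheses). -/
open Real MeasureTheory

section Aux14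

lemma aux14_cosh_lower {x : ℝ} (hx : 0 ≤ x) : 1 + x^2/2 ≤ Real.cosh x := by
  have h1 : x/2 ≤ Real.sinh (x/2) := Real.self_le_sinh_iff.2 (by linarith)
  have hc : Real.cosh (2 * (x/2)) = Real.cosh (x/2)^2 + Real.sinh (x/2)^2 :=
    Real.cosh_two_mul _
  rw [show 2*(x/2) = x by ring] at hc
  nlinarith [Real.cosh_sq (x/2), h1, hx]

lemma aux14_cosh_upper {x : ℝ} (hx : 0 ≤ x) : Real.cosh x ≤ Real.exp x := by
  rw [Real.cosh_eq]
  have := Real.exp_le_exp.2 (by linarith : -x ≤ x)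
  linarith

lemma aux14_tanh_le_self {x : ℝ} (hx : 0 ≤ x) : Real.tanh x ≤ x := by
  rw [Real.tanh_eq_sinh_div_cosh, div_le_iff₀ (Real.cosh_pos x)]
  have hmono : MonotoneOn (fun t => t * Real.cosh t - Real.sinh t) (Set.Ici 0) := by
    apply monotoneOn_of_deriv_nonneg (convex_Ici 0)
    · exact ((continuous_id.mul Real.continuous_cosh).sub Real.continuous_sinh).continuousOn
    · intro t _
      exact (((differentiableAt_fun_id).mul (Real.differentiable_cosh t)).sub
        (Real.differentiable_sinh t)).differentiableWithinAt
    · intro t ht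
      rw [interior_Ici, Set.mem_Ioi] at ht
      have hd : HasDerivAt (fun t => t * Real.cosh t - Real.sinh t)
          (1 * Real.cosh t + t * Real.sinh t - Real.cosh t) t :=
        ((hasDerivAt_id t).mul (Real.hasDerivAt_cosh t)).sub (Real.hasDerivAt_sinh t)
      rw [hd.deriv]
      have := Real.sinh_nonneg_iff.2 ht.le
      nlinarith
  have := hmono (Set.mem_Ici.2 le_rfl) (Set.mem_Ici.2 hx) hx
  simp at this
  linarith

lemma aux14_tanh_nonneg {x : ℝ} (hx : 0 ≤ x) : 0 ≤ Real.tanh x := by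
  rw [Real.tanh_eq_sinh_div_cosh]
  exact div_nonneg (Real.sinh_nonneg_iff.2 hx) (Real.cosh_pos x).le

lemma aux14_tanh_le_one (x : ℝ) : Real.tanh x ≤ 1 := by
  rw [Real.tanh_eq_sinh_div_cosh, div_le_one (Real.cosh_pos x)]
  nlinarith [Real.cosh_sq x, Real.cosh_pos x, sq_nonneg (Real.sinh x - Real.cosh x)]

lemma aux14_neg_one_le_tanh (x : ℝ) : -1 ≤ Real.tanh x := by
  rw [Real.tanh_eq_sinh_div_cosh, le_div_iff₀ (Real.cosh_pos x)]
  nlinarith [Real.cosh_sq x, Real.cosh_pos x, sq_nonneg (Real.sinh x + Real.cosh x)]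

lemma aux14_sech_sq_eq (x : ℝ) : ((Real.cosh x)^2)⁻¹ = 1 - Real.tanh x ^ 2 := by
  rw [Real.tanh_eq_sinh_div_cosh]
  have h := Real.cosh_pos x
  have h2 := Real.cosh_sq x
  field_simp
  linarith

-- numeric exponential bounds
lemma aux14_exp2_ub : Real.exp 2 ≤ 7.3890562 := by
  have h := Real.exp_one_lt_d9
  have h2 : Real.exp 2 = Real.exp 1 ^ 2 := by
    rw [← Real.exp_nat_mul]; norm_num
  nlinarith [Real.exp_pos 1]

lemma aux14_exp2_lb : (7.389056 : ℝ) ≤ Real.exp 2 := by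
  have h := Real.exp_one_gt_d9
  have h2 : Real.exp 2 = Real.exp 1 ^ 2 := by
    rw [← Real.exp_nat_mul]; norm_num
  nlinarith [Real.exp_pos 1]

lemma aux14_exp3_ub : Real.exp 3 ≤ 20.086 := by
  have h := Real.exp_one_lt_d9
  have h2 : Real.exp 3 = Real.exp 1 ^ 3 := by
    rw [← Real.exp_nat_mul]; norm_num
  have h3 : Real.exp 1 ^ 3 ≤ 2.7182818286 ^ 3 :=
    pow_le_pow_left₀ (Real.exp_pos 1).le h.le 3
  rw [h2]
  calc Real.exp 1 ^ 3 ≤ 2.7182818286 ^ 3 := h3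
  _ ≤ 20.086 := by norm_num

lemma aux14_exp3_lb : (20.0855 : ℝ) ≤ Real.exp 3 := by
  have h := Real.exp_one_gt_d9
  have h2 : Real.exp 3 = Real.exp 1 ^ 3 := by
    rw [← Real.exp_nat_mul]; norm_num
  have h3 : (2.7182818283:ℝ) ^ 3 ≤ Real.exp 1 ^ 3 :=
    pow_le_pow_left₀ (by norm_num) h.le 3
  rw [h2]
  calc (20.0855:ℝ) ≤ 2.7182818283 ^ 3 := by norm_num
  _ ≤ Real.exp 1 ^ 3 := h3

lemma aux14_exp_lb_pow (t : ℝ) (ht : 0 ≤ t) (n : ℕ) (hn : 0 < n) :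
    (1 + t/n)^n ≤ Real.exp t := by
  have h1 : Real.exp t = Real.exp (t/n) ^ n := by
    rw [← Real.exp_nat_mul]
    congr 1
    field_simp
  rw [h1]
  apply pow_le_pow_left₀ (by positivity)
  have := Real.add_one_le_exp (t/n)
  linarith

lemma aux14_exp34_lb : (2.105 : ℝ) ≤ Real.exp (3/4) := by
  have h := aux14_exp_lb_pow (3/4) (by norm_num) 64 (by norm_num)
  have : ((1 : ℝ) + (3/4)/64)^64 ≥ 2.105 := by
    norm_num
  linarith

lemma aux14_exp14_lb : (1.2833 : ℝ) ≤ Real.exp (1/4) := by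
  have h := aux14_exp_lb_pow (1/4) (by norm_num) 64 (by norm_num)
  have : ((1 : ℝ) + (1/4)/64)^64 ≥ 1.2833 := by
    norm_num
  linarith

lemma aux14_exp144_ub : Real.exp (36/25) ≤ 4.74 := by
  have h1 : Real.exp (36/25) * Real.exp (14/25) = Real.exp 2 := by
    rw [← Real.exp_add]; norm_num
  have h2 : (1:ℝ) + 14/25 ≤ Real.exp (14/25) := by
    have := Real.add_one_le_exp (14/25 : ℝ); linarith
  nlinarith [aux14_exp2_ub, Real.exp_pos (36/25), Real.exp_pos (14/25)]

lemma aux14_exp94_ub : Real.exp (9/4) ≤ 9.55 := by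
  have h1 : Real.exp (9/4) * Real.exp (3/4) = Real.exp 3 := by
    rw [← Real.exp_add]; norm_num
  nlinarith [aux14_exp3_ub, aux14_exp34_lb, Real.exp_pos (9/4), Real.exp_pos (3/4)]

lemma aux14_exp94_lb : (9.48 : ℝ) ≤ Real.exp (9/4) := by
  have h1 : Real.exp 2 * Real.exp (1/4) = Real.exp (9/4) := by
    rw [← Real.exp_add]; norm_num
  nlinarith [aux14_exp2_lb, aux14_exp14_lb, Real.exp_pos 2, Real.exp_pos (1/4)]

lemma aux14_exp24_ub : Real.exp (12/5) ≤ 12.6 := by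
  have h1 : Real.exp (12/5) * Real.exp (3/5) = Real.exp 3 := by
    rw [← Real.exp_add]; norm_num
  have h2 : (1:ℝ) + 3/5 ≤ Real.exp (3/5) := by
    have := Real.add_one_le_exp (3/5 : ℝ); linarith
  nlinarith [aux14_exp3_ub, Real.exp_pos (12/5), Real.exp_pos (3/5)]

lemma aux14_exp324_lb : (24.9 : ℝ) ≤ Real.exp (81/25) := by
  have h1 : Real.exp 3 * Real.exp (6/25) = Real.exp (81/25) := by
    rw [← Real.exp_add]; norm_num
  have h2 : (1:ℝ) + 6/25 ≤ Real.exp (6/25) := by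
    have := Real.add_one_le_exp (6/25 : ℝ); linarith
  nlinarith [aux14_exp3_lb, Real.exp_pos 3, Real.exp_pos (6/25)]

lemma aux14_sqrtpi_lb : (1.77 : ℝ) ≤ Real.sqrt Real.pi := by
  nlinarith [Real.sq_sqrt Real.pi_pos.le, Real.sqrt_nonneg Real.pi,
    Real.pi_gt_d6]

lemma aux14_sqrtpi_ub : Real.sqrt Real.pi ≤ 1.775 := by
  nlinarith [Real.sq_sqrt Real.pi_pos.le, Real.sqrt_nonneg Real.pi, Real.pi_lt_d2]

-- exp(-u) ≥ exp(-a) (1 + a - u)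
lemma aux14_exp_lin_lb (a u : ℝ) : Real.exp (-a) * (1 + a - u) ≤ Real.exp (-u) := by
  rcases le_or_gt (1 + a - u) 0 with h | h
  · calc Real.exp (-a) * (1 + a - u) ≤ 0 := mul_nonpos_of_nonneg_of_nonpos (Real.exp_pos _).le h
    _ ≤ _ := (Real.exp_pos _).le
  · have h1 : Real.exp (-a) * Real.exp (a - u) = Real.exp (-u) := by
      rw [← Real.exp_add]; ring_nf
    have h2 : 1 + a - u ≤ Real.exp (a - u) := by
      have := Real.add_one_le_exp (a - u); linarith
    nlinarith [Real.exp_pos (-a)]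

-- integral lower bound
lemma aux14_int_lower {s r : ℝ} (h0 : 0 ≤ s) (hsr : s ≤ r) :
    s - s^3/3 + (r - s) * Real.exp (-r^2) ≤ ∫ t in (0:ℝ)..r, Real.exp (-t^2) := by
  have hc : Continuous (fun t : ℝ => Real.exp (-t^2)) := by continuity
  have hint : ∀ a b : ℝ, IntervalIntegrable (fun t : ℝ => Real.exp (-t^2)) volume a b :=
    fun a b => hc.intervalIntegrable a b
  have hsplit : (∫ t in (0:ℝ)..r, Real.exp (-t^2))
      = (∫ t in (0:ℝ)..s, Real.exp (-t^2)) + ∫ t in s..r, Real.exp (-t^2) :=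
    (intervalIntegral.integral_add_adjacent_intervals (hint 0 s) (hint s r)).symm
  have h1 : (∫ t in (0:ℝ)..s, (1 - t^2)) ≤ ∫ t in (0:ℝ)..s, Real.exp (-t^2) := by
    apply intervalIntegral.integral_mono_on h0
      ((continuous_const.sub (continuous_pow 2)).intervalIntegrable 0 s) (hint 0 s)
    intro t _
    have := Real.add_one_le_exp (-t^2)
    simp only [Pi.sub_apply]
    linarith
  have h1' : (∫ t in (0:ℝ)..s, (1 - t^2)) = s - s^3/3 := by
    rw [intervalIntegral.integral_sub (intervalIntegrable_const)
      ((continuous_pow 2).intervalIntegrable 0 s), integral_pow,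
      intervalIntegral.integral_const]
    simp
    ring
  have h2 : (∫ t in s..r, Real.exp (-r^2)) ≤ ∫ t in s..r, Real.exp (-t^2) := by
    apply intervalIntegral.integral_mono_on hsr (intervalIntegrable_const) (hint s r)
    intro t ht
    apply Real.exp_le_exp.2
    have ht1 := ht.1; have ht2 := ht.2
    nlinarith
  have h2' : (∫ t in s..r, Real.exp (-r^2)) = (r - s) * Real.exp (-r^2) := by
    rw [intervalIntegral.integral_const]
    simp [smul_eq_mul]
  linarith

lemma aux14_int_mono {s r : ℝ} (hsr : s ≤ r) :
    (∫ t in (0:ℝ)..s, Real.exp (-t^2)) ≤ ∫ t in (0:ℝ)..r, Real.exp (-t^2) := by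
  have hc : Continuous (fun t : ℝ => Real.exp (-t^2)) := by continuity
  have hint : ∀ a b : ℝ, IntervalIntegrable (fun t : ℝ => Real.exp (-t^2)) volume a b :=
    fun a b => hc.intervalIntegrable a b
  have hsplit : (∫ t in (0:ℝ)..r, Real.exp (-t^2))
      = (∫ t in (0:ℝ)..s, Real.exp (-t^2)) + ∫ t in s..r, Real.exp (-t^2) :=
    (intervalIntegral.integral_add_adjacent_intervals (hint 0 s) (hint s r)).symm
  have h2 : 0 ≤ ∫ t in s..r, Real.exp (-t^2) :=
    intervalIntegral.integral_nonneg hsr (fun t _ => (Real.exp_pos _).le)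
  linarith

lemma aux14_E_lb {r : ℝ} (hr : 3/2 ≤ r) :
    (0.6548 : ℝ) ≤ ∫ t in (0:ℝ)..r, Real.exp (-t^2) := by
  have h1 := aux14_int_lower (show (0:ℝ) ≤ 6/5 by norm_num) (show (6/5 : ℝ) ≤ 3/2 by norm_num)
  have h2 := aux14_int_mono hr
  have h3 : Real.exp (-(3/2:ℝ)^2) = Real.exp (-(9/4)) := by norm_num
  have h4 : (0.1029 : ℝ) ≤ Real.exp (-(9/4 : ℝ)) := by
    rw [Real.exp_neg]
    rw [le_inv_comm₀ (by norm_num) (Real.exp_pos _)]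
    calc Real.exp (9/4) ≤ 9.55 := aux14_exp94_ub
    _ ≤ 0.1029⁻¹ := by norm_num
  rw [h3] at h1
  nlinarith

-- 2 r^3 ≤ exp (r^2) for r ≥ 2.1
lemma aux14_cube {r : ℝ} (hr : 2.1 ≤ r) : 2 * r^3 ≤ Real.exp (r^2) := by
  have h0 : (0:ℝ) < r := by linarith
  have h1 : Real.exp (r^2) = Real.exp (r^2/6) ^ 6 := by
    rw [← Real.exp_nat_mul]
    congr 1
    push_cast
    ring
  have h2 : 1 + r^2/6 ≤ Real.exp (r^2/6) := by
    have := Real.add_one_le_exp (r^2/6); linarith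
  have h3 : ((1 + r^2/6)^2)^3 ≤ Real.exp (r^2) := by
    rw [h1, ← pow_mul]
    apply pow_le_pow_left₀ (by positivity) h2
  have h4 : (1.26 * r)^3 ≤ ((1 + r^2/6)^2)^3 := by
    apply pow_le_pow_left₀ (by positivity)
    nlinarith [sq_nonneg (r - 1.4), sq_nonneg (r - 2.1), sq_nonneg r]
  nlinarith [h3, h4, pow_pos h0 3]

end Aux14

section Key14

-- key inequality A (times sqrt pi): the H0-coefficient F is nonneg
lemma aux14_keyA {r : ℝ} (hr : 0 < r) :
    0 ≤ 2 * (∫ t in (0:ℝ)..r, Real.exp (-t^2)) + r * Real.exp (-r^2) * (5/2 - r^2) := by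
  have hX : 0 < Real.exp (-r^2) := Real.exp_pos _
  rcases le_or_gt (r^2) (9/2) with h | h
  · have hE := aux14_int_lower (le_refl 0) hr.le
    norm_num at hE
    have hE' : r * Real.exp (-r^2) ≤ ∫ t in (0:ℝ)..r, Real.exp (-t^2) := by
      have : (0:ℝ) - 0^3/3 + (r - 0) * Real.exp (-r^2) = r * Real.exp (-r^2) := by ring
      linarith [aux14_int_lower (le_refl 0) hr.le, this.ge]
    nlinarith [mul_pos hr hX]
  · have hr21 : (2.1 : ℝ) ≤ r := by nlinarith
    have hE := aux14_E_lb (by linarith : (3/2 : ℝ) ≤ r)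
    have hc := aux14_cube hr21
    have hXe : Real.exp (-r^2) * Real.exp (r^2) = 1 := by
      rw [← Real.exp_add]; simp
    have h5 : r * Real.exp (-r^2) * (r^2 - 5/2) ≤ 1/2 := by
      have h6 : r * Real.exp (-r^2) * (r^2 - 5/2) ≤ r^3 * Real.exp (-r^2) := by
        nlinarith [mul_pos hr hX]
      have h7 : 2 * r^3 * Real.exp (-r^2) ≤ Real.exp (r^2) * Real.exp (-r^2) := by
        apply mul_le_mul_of_nonneg_right hc hX.le
      nlinarith [hXe, h7]
    nlinarith


-- linear lower bound on exp(-r^2), valid where r^2 ≤ 2.44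
lemma aux14_Xlin {r : ℝ} (h : r^2 ≤ 2.44) : 0.206 * (2.44 - r^2) ≤ Real.exp (-r^2) := by
  have h1 := aux14_exp_lin_lb (36/25) (r^2)
  have h2 : (0.206 : ℝ) ≤ Real.exp (-(36/25)) := by
    rw [Real.exp_neg, le_inv_comm₀ (by norm_num) (Real.exp_pos _)]
    calc Real.exp (36/25) ≤ 4.74 := aux14_exp144_ub
    _ ≤ 0.206⁻¹ := by norm_num
  have h3 : (1 : ℝ) + 36/25 - r^2 = 2.44 - r^2 := by norm_num
  rw [h3] at h1
  nlinarith [Real.exp_pos (-(36/25))]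

lemma aux14_mul3 {x y z a b c : ℝ} (hx : 0 ≤ x) (ha : x ≤ a) (hy : 0 ≤ y)
    (hb : y ≤ b) (hz : 0 ≤ z) (hc : z ≤ c) : x*y*z ≤ a*b*c := by
  have h1 : x*y ≤ a*b := mul_le_mul ha hb hy (le_trans hx ha)
  exact mul_le_mul h1 hc hz (mul_nonneg (hx.trans ha) (hy.trans hb))


set_option maxHeartbeats 1000000 in
lemma aux14_case2 {r : ℝ} (h1 : 0.7 ≤ r) (h2 : r ≤ 1) :
    3.55*r^2 ≤ (2*r*(r-r^3/3)+0.206*r^2*(2.44-r^2)*(2.5-r^2)+1.77*(1-r^2))*(1+r^2/2)^2 := by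
  have hx : (0:ℝ) ≤ r - 0.7 := by linarith
  have hy : (0:ℝ) ≤ 1 - r := by linarith
  linarith [
    mul_nonneg (pow_nonneg hx 0) (pow_nonneg hy 10),
    mul_nonneg (pow_nonneg hx 1) (pow_nonneg hy 9),
    mul_nonneg (pow_nonneg hx 2) (pow_nonneg hy 8),
    mul_nonneg (pow_nonneg hx 3) (pow_nonneg hy 7),
    mul_nonneg (pow_nonneg hx 4) (pow_nonneg hy 6),
    mul_nonneg (pow_nonneg hx 5) (pow_nonneg hy 5),
    mul_nonneg (pow_nonneg hx 6) (pow_nonneg hy 4),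
    mul_nonneg (pow_nonneg hx 7) (pow_nonneg hy 3),
    mul_nonneg (pow_nonneg hx 8) (pow_nonneg hy 2),
    mul_nonneg (pow_nonneg hx 9) (pow_nonneg hy 1),
    mul_nonneg (pow_nonneg hx 10) (pow_nonneg hy 0)]

set_option maxHeartbeats 1000000 in
lemma aux14_case3 {r : ℝ} (h1 : 1 ≤ r) (h2 : r ≤ 1.2) :
    3.55*r^2 ≤ (2*r*(r-r^3/3)+0.206*r^2*(2.44-r^2)*(2.5-r^2)+1.77*0.0675)*(1+r^2/2)^2 := by
  have hx : (0:ℝ) ≤ r - 1 := by linarith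
  have hy : (0:ℝ) ≤ 1.2 - r := by linarith
  linarith [
    mul_nonneg (pow_nonneg hx 0) (pow_nonneg hy 10),
    mul_nonneg (pow_nonneg hx 1) (pow_nonneg hy 9),
    mul_nonneg (pow_nonneg hx 2) (pow_nonneg hy 8),
    mul_nonneg (pow_nonneg hx 3) (pow_nonneg hy 7),
    mul_nonneg (pow_nonneg hx 4) (pow_nonneg hy 6),
    mul_nonneg (pow_nonneg hx 5) (pow_nonneg hy 5),
    mul_nonneg (pow_nonneg hx 6) (pow_nonneg hy 4),
    mul_nonneg (pow_nonneg hx 7) (pow_nonneg hy 3),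
    mul_nonneg (pow_nonneg hx 8) (pow_nonneg hy 2),
    mul_nonneg (pow_nonneg hx 9) (pow_nonneg hy 1),
    mul_nonneg (pow_nonneg hx 10) (pow_nonneg hy 0)]

set_option maxHeartbeats 1000000 in
lemma aux14_case4 {r : ℝ} (h1 : 1.2 ≤ r) (h2 : r ≤ 1.5) :
    3.55*r^2 ≤ (2*r*(0.624+(r-1.2)*(0.206*(2.44-r^2)))+0.206*r^2*(2.44-r^2)*(2.5-r^2)+1.77*0.0497)*(1+r^2/2)^2 := by
  have hx : (0:ℝ) ≤ r - 1.2 := by linarith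
  have hy : (0:ℝ) ≤ 1.5 - r := by linarith
  linarith [
    mul_nonneg (pow_nonneg hx 0) (pow_nonneg hy 10),
    mul_nonneg (pow_nonneg hx 1) (pow_nonneg hy 9),
    mul_nonneg (pow_nonneg hx 2) (pow_nonneg hy 8),
    mul_nonneg (pow_nonneg hx 3) (pow_nonneg hy 7),
    mul_nonneg (pow_nonneg hx 4) (pow_nonneg hy 6),
    mul_nonneg (pow_nonneg hx 5) (pow_nonneg hy 5),
    mul_nonneg (pow_nonneg hx 6) (pow_nonneg hy 4),
    mul_nonneg (pow_nonneg hx 7) (pow_nonneg hy 3),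
    mul_nonneg (pow_nonneg hx 8) (pow_nonneg hy 2),
    mul_nonneg (pow_nonneg hx 9) (pow_nonneg hy 1),
    mul_nonneg (pow_nonneg hx 10) (pow_nonneg hy 0)]

-- core of key inequality B, context-free
set_option maxHeartbeats 8000000 in
lemma aux14_keyB_core (r E X S T W : ℝ) (hr : 0 < r) (hX0 : 0 < X)
    (hT0 : 0 ≤ T) (hT1 : T ≤ 1) (hTr : T ≤ r)
    (hS0 : 0 < S) (hSgr : 1 - r^2 ≤ S)
    (hW1 : (1.77:ℝ) ≤ W) (hW2 : W ≤ 1.775)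
    (hSle : S * (1 + r^2/2)^2 ≤ 1)
    (hEr : r * X ≤ E) (hE : r - r^3/3 ≤ E)
    (hE12 : 1.2 ≤ r → 0.624 + (r - 1.2) * X ≤ E)
    (hE15 : 1.5 ≤ r → (0.6548:ℝ) ≤ E)
    (hXlin : r^2 ≤ 2.44 → 0.206 * (2.44 - r^2) ≤ X)
    (hXup94 : 9/4 ≤ r^2 → X ≤ 0.1055)
    (hXup324 : 81/25 ≤ r^2 → X ≤ 0.0402)
    (hcube : 2.1 ≤ r → 2 * r^3 * X ≤ 1)
    (hSg12 : r ≤ 1.2 → (0.0675:ℝ) ≤ S)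
    (hSg15 : r ≤ 1.5 → (0.0497:ℝ) ≤ S) :
    0 ≤ 2 * r * E + r^2 * X * (5/2 - r^2) + W * (S * (1 - 2 * r * T)) := by
  have hW0 : (0:ℝ) < W := by linarith
  have hq : (0:ℝ) < (1+r^2/2)^2 := by positivity
  have hSub : 3.55*(r^2*S)*(1+r^2/2)^2 ≤ 3.55*r^2 := by
    have := mul_le_mul_of_nonneg_left hSle (by positivity : (0:ℝ) ≤ 3.55*r^2)
    linarith [this]
  have hTS : 2 * W * (r * (T * S)) ≤ 3.55 * (r^2 * S) := by
    have m1 : T * S ≤ r * S := mul_le_mul_of_nonneg_right hTr hS0.le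
    have m2 : r * (T * S) ≤ r * (r * S) := mul_le_mul_of_nonneg_left m1 hr.le
    have m3 : W * (r * (T * S)) ≤ 1.775 * (r * (r * S)) :=
      mul_le_mul hW2 m2 (by positivity) (by norm_num)
    nlinarith [m3]
  have hTS1 : 2 * W * (r * (T * S)) ≤ 3.55 * (r * S) := by
    have m1 : T * S ≤ 1 * S := mul_le_mul_of_nonneg_right hT1 hS0.le
    have m2 : r * (T * S) ≤ r * (1 * S) := mul_le_mul_of_nonneg_left m1 hr.le
    have m3 : W * (r * (T * S)) ≤ 1.775 * (r * (1 * S)) :=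
      mul_le_mul hW2 m2 (by positivity) (by norm_num)
    nlinarith [m3]
  have hWSexpand : W * (S * (1 - 2*r*T)) = W*S - 2*W*(r*(T*S)) := by ring
  rcases le_or_gt r 0.7 with hc1 | hc1
  · -- case 1 : 0 < r ≤ 0.7
    have h1 : 0 ≤ 1 - 2*r*T := by nlinarith
    have h2 : 0 ≤ W * (S * (1 - 2*r*T)) := mul_nonneg hW0.le (mul_nonneg hS0.le h1)
    have h3 : 0 ≤ r^2 * X * (5/2 - r^2) + 2*r*(r*X) := by
      have hr2 : r^2 ≤ 0.49 := by nlinarith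
      have hp : 0 ≤ (r^2*X) * (0.49 - r^2) :=
        mul_nonneg (mul_nonneg (sq_nonneg r) hX0.le) (by linarith)
      nlinarith [mul_nonneg (sq_nonneg r) hX0.le, hp]
    have h4 : 2*r*(r*X) ≤ 2*r*E := by nlinarith [hEr]
    linarith
  rcases le_or_gt r 1 with hc2 | hc2
  · -- case 2 : 0.7 ≤ r ≤ 1
    have hXl : 0.206 * (2.44 - r^2) ≤ X := hXlin (by nlinarith)
    have hWSp : 1.77 * (1 - r^2) ≤ W * S :=
      mul_le_mul hW1 hSgr (by nlinarith) hW0.le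
    have hx : (0:ℝ) ≤ r - 0.7 := by linarith
    have hy : (0:ℝ) ≤ 1 - r := by linarith
    have hP : 3.55*r^2 ≤ (2*r*(r-r^3/3)+0.206*r^2*(2.44-r^2)*(2.5-r^2)+1.77*(1-r^2))*(1+r^2/2)^2 := aux14_case2 (by linarith) (by linarith)
    have halpha : 0 ≤ 2*r*(r-r^3/3)+0.206*r^2*(2.44-r^2)*(2.5-r^2)+1.77*(1-r^2) - 3.55*(r^2*S) := by
      nlinarith [hP, hSub, hq]
    have hmid : r^2 * (0.206*(2.44-r^2)) * (5/2 - r^2) ≤ r^2 * X * (5/2 - r^2) := by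
      have h5 : (0:ℝ) ≤ 5/2 - r^2 := by nlinarith
      have := mul_le_mul_of_nonneg_right
        (mul_le_mul_of_nonneg_left hXl (sq_nonneg r)) h5
      linarith [this]
    have hEE : 2*r*(r - r^3/3) ≤ 2*r*E := by nlinarith [hE]
    linarith [hWSp, hTS, halpha, hmid, hEE, hWSexpand.ge]
  rcases le_or_gt r 1.2 with hc3 | hc3
  · -- case 3 : 1 ≤ r ≤ 1.2
    have hXl : 0.206 * (2.44 - r^2) ≤ X := hXlin (by nlinarith)
    have hSg : (0.0675:ℝ) ≤ S := hSg12 hc3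
    have hWSp : 1.77 * 0.0675 ≤ W * S := by nlinarith [hSg, hW1, hS0]
    have hx : (0:ℝ) ≤ r - 1 := by linarith
    have hy : (0:ℝ) ≤ 1.2 - r := by linarith
    have hP : 3.55*r^2 ≤ (2*r*(r-r^3/3)+0.206*r^2*(2.44-r^2)*(2.5-r^2)+1.77*0.0675)*(1+r^2/2)^2 := aux14_case3 (by linarith) (by linarith)
    have halpha : 0 ≤ 2*r*(r-r^3/3)+0.206*r^2*(2.44-r^2)*(2.5-r^2)+1.77*0.0675 - 3.55*(r^2*S) := by
      nlinarith [hP, hSub, hq]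
    have hmid : r^2 * (0.206*(2.44-r^2)) * (5/2 - r^2) ≤ r^2 * X * (5/2 - r^2) := by
      have h5 : (0:ℝ) ≤ 5/2 - r^2 := by nlinarith
      have := mul_le_mul_of_nonneg_right
        (mul_le_mul_of_nonneg_left hXl (sq_nonneg r)) h5
      linarith [this]
    have hEE : 2*r*(r - r^3/3) ≤ 2*r*E := by nlinarith [hE]
    linarith [hWSp, hTS, halpha, hmid, hEE, hWSexpand.ge]
  rcases le_or_gt r 1.5 with hc4 | hc4
  · -- case 4 : 1.2 ≤ r ≤ 1.5
    have hXl : 0.206 * (2.44 - r^2) ≤ X := hXlin (by nlinarith)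
    have hSg : (0.0497:ℝ) ≤ S := hSg15 hc4
    have hWSp : 1.77 * 0.0497 ≤ W * S := by nlinarith [hSg, hW1, hS0]
    have hEl : 0.624 + (r - 1.2) * (0.206 * (2.44 - r^2)) ≤ E := by
      have h1 := hE12 hc3.le
      have h2 : (r - 1.2) * (0.206 * (2.44 - r^2)) ≤ (r - 1.2) * X :=
        mul_le_mul_of_nonneg_left hXl (by linarith)
      linarith
    have hx : (0:ℝ) ≤ r - 1.2 := by linarith
    have hy : (0:ℝ) ≤ 1.5 - r := by linarith
    have hP : 3.55*r^2 ≤ (2*r*(0.624+(r-1.2)*(0.206*(2.44-r^2)))+0.206*r^2*(2.44-r^2)*(2.5-r^2)+1.77*0.0497)*(1+r^2/2)^2 := aux14_case4 (by linarith) (by linarith)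
    have halpha : 0 ≤ 2*r*(0.624+(r-1.2)*(0.206*(2.44-r^2)))+0.206*r^2*(2.44-r^2)*(2.5-r^2)+1.77*0.0497 - 3.55*(r^2*S) := by
      nlinarith [hP, hSub, hq]
    have hmid : r^2 * (0.206*(2.44-r^2)) * (5/2 - r^2) ≤ r^2 * X * (5/2 - r^2) := by
      have h5 : (0:ℝ) ≤ 5/2 - r^2 := by nlinarith
      have := mul_le_mul_of_nonneg_right
        (mul_le_mul_of_nonneg_left hXl (sq_nonneg r)) h5
      linarith [this]
    have hEE : 2*r*(0.624+(r-1.2)*(0.206*(2.44-r^2))) ≤ 2*r*E := by nlinarith [hEl]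
    linarith [hWSp, hTS, halpha, hmid, hEE, hWSexpand.ge]
  -- from here on r ≥ 1.5 : E ≥ 0.6548
  have hEn : (0.6548:ℝ) ≤ E := hE15 (by linarith)
  have hEE : 2*r*0.6548 ≤ 2*r*E := by nlinarith [hEn]
  have hr2 : (2.25:ℝ) ≤ r^2 := by nlinarith
  have hSu' : ∀ m : ℝ, m^2 ≤ r^2 → S * (1+m^2/2)^2 ≤ 1 := by
    intro m hm
    have : (1+m^2/2)^2 ≤ (1+r^2/2)^2 := by nlinarith [sq_nonneg m]
    nlinarith [mul_le_mul_of_nonneg_left this hS0.le]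
  have hSu225 : S ≤ 0.2215 := by
    have h1 := hSu' 1.5 (by nlinarith)
    nlinarith [hS0]
  have hWSlin : ∀ u : ℝ, S ≤ u → -(3.55*u) * r ≤ W * (S * (1 - 2*r*T)) := by
    intro u hu
    rw [hWSexpand]
    have m2 : (3.55*r)*S ≤ (3.55*r)*u :=
      mul_le_mul_of_nonneg_left hu (by linarith)
    have := mul_nonneg hW0.le hS0.le
    nlinarith [hTS1, m2, this]
  rcases le_or_gt r 1.8 with hc5 | hc5
  · -- case 5 : 1.5 ≤ r ≤ 1.8
    have hXu : X ≤ 0.1055 := hXup94 (by nlinarith)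
    have hmid : -(0.26:ℝ) ≤ r^2 * X * (5/2 - r^2) := by
      rcases le_or_gt (r^2) (5/2) with h | h
      · have : 0 ≤ r^2 * X * (5/2 - r^2) :=
          mul_nonneg (mul_nonneg (sq_nonneg r) hX0.le) (by linarith)
        linarith
      · have h1 : r^2 * X * (r^2 - 5/2) ≤ 3.24 * 0.1055 * 0.74 :=
          aux14_mul3 (sq_nonneg r) (by nlinarith) hX0.le hXu (by linarith) (by nlinarith)
        nlinarith [h1]
    have hWS := hWSlin 0.2215 hSu225
    linarith [hEE, hmid, hWS]
  rcases le_or_gt r 2.2 with hc6 | hc6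
  · -- case 6 : 1.8 ≤ r ≤ 2.2
    have hXu : X ≤ 0.0402 := hXup324 (by nlinarith)
    have hSu : S ≤ 0.1457 := by
      have h1 := hSu' 1.8 (by nlinarith)
      nlinarith [hS0]
    have hmid : -(0.46:ℝ) ≤ r^2 * X * (5/2 - r^2) := by
      rcases le_or_gt (r^2) (5/2) with h | h
      · have : 0 ≤ r^2 * X * (5/2 - r^2) :=
          mul_nonneg (mul_nonneg (sq_nonneg r) hX0.le) (by linarith)
        linarith
      · have h1 : r^2 * X * (r^2 - 5/2) ≤ 4.84 * 0.0402 * 2.34 :=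
          aux14_mul3 (sq_nonneg r) (by nlinarith) hX0.le hXu (by linarith) (by nlinarith)
        nlinarith [h1]
    have hWS := hWSlin 0.1457 hSu
    linarith [hEE, hmid, hWS]
  · -- case 7 : r ≥ 2.2
    have hcu : 2 * r^3 * X ≤ 1 := hcube (by linarith)
    have hSu : S ≤ 0.0855 := by
      have h1 := hSu' 2.2 (by nlinarith)
      nlinarith [hS0]
    have hmid : -(0.5:ℝ) * r ≤ r^2 * X * (5/2 - r^2) := by
      have h1 : r^2 * X * (r^2 - 5/2) ≤ r^3 * X * r := by
        nlinarith [mul_nonneg (sq_nonneg r) hX0.le]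
      have h2 : (r^3 * X) * r ≤ (1/2) * r := by
        apply mul_le_mul_of_nonneg_right _ (by linarith)
        linarith [hcu]
      nlinarith [h1, h2]
    have hWS := hWSlin 0.0855 hSu
    linarith [hEE, hmid, hWS]

set_option maxHeartbeats 1600000 in
lemma aux14_keyB {r : ℝ} (hr : 0 < r) :
    0 ≤ 2 * r * (∫ t in (0:ℝ)..r, Real.exp (-t^2)) + r^2 * Real.exp (-r^2) * (5/2 - r^2)
      + Real.sqrt Real.pi * (((Real.cosh r)^2)⁻¹ * (1 - 2 * r * Real.tanh r)) := by
  have hcp : 0 < Real.cosh r := Real.cosh_pos r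
  have hS0 : (0:ℝ) < ((Real.cosh r)^2)⁻¹ := by positivity
  have hX0 : (0:ℝ) < Real.exp (-r^2) := Real.exp_pos _
  have hSge : ∀ u : ℝ, u ≤ 0.0675 → Real.exp (-(2*r)) ≥ u →
      u ≤ ((Real.cosh r)^2)⁻¹ := by
    intro u _ h2
    have h1 : Real.cosh r ^ 2 ≤ Real.exp r ^ 2 :=
      pow_le_pow_left₀ hcp.le (aux14_cosh_upper hr.le) 2
    have h2' : Real.exp r ^ 2 = Real.exp (2*r) := by
      rw [← Real.exp_nat_mul]; norm_num
    have h3 : ((Real.exp (2*r)))⁻¹ ≤ ((Real.cosh r)^2)⁻¹ := by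
      apply inv_anti₀ (by positivity)
      rw [← h2']; exact h1
    rw [Real.exp_neg] at h2
    linarith
  apply aux14_keyB_core r _ _ _ _ _ hr hX0
    (aux14_tanh_nonneg hr.le) (aux14_tanh_le_one r) (aux14_tanh_le_self hr.le)
    hS0
  · -- 1 - r^2 ≤ S
    have h := aux14_sech_sq_eq r
    have hT0 := aux14_tanh_nonneg hr.le
    have hTr := aux14_tanh_le_self hr.le
    nlinarith
  · exact aux14_sqrtpi_lb
  · exact aux14_sqrtpi_ub
  · -- hSle
    have h4 : (1 + r^2/2)^2 ≤ (Real.cosh r)^2 :=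
      pow_le_pow_left₀ (by positivity) (aux14_cosh_lower hr.le) 2
    rw [inv_mul_le_iff₀ (by positivity)]
    linarith
  · -- hEr
    have h := aux14_int_lower (le_refl 0) hr.le
    linarith [h]
  · -- hE
    have h := aux14_int_lower hr.le (le_refl r)
    linarith [h, mul_pos hr hX0]
  · -- hE12
    intro h12
    have h := aux14_int_lower (show (0:ℝ) ≤ 6/5 by norm_num) (by linarith : (6/5:ℝ) ≤ r)
    nlinarith [h]
  · -- hE15
    intro h15
    exact aux14_E_lb (by linarith)
  · -- hXlin
    exact aux14_Xlin
  · -- hXup94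
    intro h
    have h1 : Real.exp (-r^2) ≤ Real.exp (-(9/4)) := Real.exp_le_exp.2 (by linarith)
    have h2 : Real.exp (-(9/4:ℝ)) ≤ 0.1055 := by
      rw [Real.exp_neg]
      rw [inv_le_comm₀ (Real.exp_pos _) (by norm_num)]
      calc (0.1055:ℝ)⁻¹ ≤ 9.48 := by norm_num
      _ ≤ Real.exp (9/4) := aux14_exp94_lb
    linarith
  · -- hXup324
    intro h
    have h1 : Real.exp (-r^2) ≤ Real.exp (-(81/25)) := Real.exp_le_exp.2 (by linarith)
    have h2 : Real.exp (-(81/25:ℝ)) ≤ 0.0402 := by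
      rw [Real.exp_neg]
      rw [inv_le_comm₀ (Real.exp_pos _) (by norm_num)]
      calc (0.0402:ℝ)⁻¹ ≤ 24.9 := by norm_num
      _ ≤ Real.exp (81/25) := aux14_exp324_lb
    linarith
  · -- hcube
    intro h21
    have hc := aux14_cube h21
    have hXe : Real.exp (-r^2) * Real.exp (r^2) = 1 := by
      rw [← Real.exp_add]; simp
    have h7 : 2 * r^3 * Real.exp (-r^2) ≤ Real.exp (r^2) * Real.exp (-r^2) :=
      mul_le_mul_of_nonneg_right hc hX0.le
    nlinarith [hXe, h7]
  · -- hSg12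
    intro h12
    apply hSge _ (by norm_num)
    have : Real.exp (-(12/5:ℝ)) ≤ Real.exp (-(2*r)) := Real.exp_le_exp.2 (by linarith)
    have h2 : (0.0675:ℝ) ≤ Real.exp (-(12/5:ℝ)) := by
      rw [Real.exp_neg, le_inv_comm₀ (by norm_num) (Real.exp_pos _)]
      calc Real.exp (12/5) ≤ 12.6 := aux14_exp24_ub
      _ ≤ (0.0675:ℝ)⁻¹ := by norm_num
    linarith
  · -- hSg15
    intro h15
    apply hSge _ (by norm_num)
    have : Real.exp (-(3:ℝ)) ≤ Real.exp (-(2*r)) := Real.exp_le_exp.2 (by linarith)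
    have h2 : (0.0497:ℝ) ≤ Real.exp (-(3:ℝ)) := by
      rw [Real.exp_neg, le_inv_comm₀ (by norm_num) (Real.exp_pos _)]
      calc Real.exp (3:ℝ) ≤ 20.086 := aux14_exp3_ub
      _ ≤ (0.0497:ℝ)⁻¹ := by norm_num
    linarith

end Key14

lemma aux14_denom (a b c : ℝ) (h1 : 2 * c ≤ b) (h2 : 0 ≤ c) (h3 : b + c < a)
    (v r : ℝ) (hr : 0 < r) :
    0 ≤ a - b * Real.tanh v + 2 * c * v * Real.tanh r * Real.exp (-v^2) := by
  have hXv0 : (0:ℝ) < Real.exp (-v^2) := Real.exp_pos _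
  have htv : Real.tanh v ≤ 1 := aux14_tanh_le_one v
  have hb0 : 0 ≤ b := by linarith
  have hbt : b * Real.tanh v ≤ b := by nlinarith
  have hT0 : 0 ≤ Real.tanh r := aux14_tanh_nonneg hr.le
  have hT1 : Real.tanh r ≤ 1 := aux14_tanh_le_one r
  have hXe : Real.exp (-v^2) * Real.exp (v^2) = 1 := by
    rw [← Real.exp_add]; simp
  have hq : v^2 + 1 ≤ Real.exp (v^2) := Real.add_one_le_exp _
  have hvx1 : -(1:ℝ) ≤ 2 * v * Real.exp (-v^2) := by
    nlinarith [mul_nonneg (sq_nonneg (v+1)) hXv0.le,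
      mul_le_mul_of_nonneg_left hq hXv0.le]
  have hkey : -c ≤ 2 * c * v * Real.tanh r * Real.exp (-v^2) := by
    have h5 : 2 * c * v * Real.tanh r * Real.exp (-v^2)
        = c * (Real.tanh r * (2 * v * Real.exp (-v^2))) := by ring
    rw [h5]
    rcases le_or_gt 0 (2 * v * Real.exp (-v^2)) with hp | hp
    · nlinarith [mul_nonneg hT0 hp]
    · have h6 : -(1:ℝ) ≤ Real.tanh r * (2 * v * Real.exp (-v^2)) := by
        nlinarith [mul_le_mul_of_nonpos_right hT1 hp.le]
      nlinarith
  linarith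

/-- nonnegativity of the energy density of the example shell:
if `b ≥ 2c`, `c ≥ 0`, `ℋ₀ ≥ c`, `a > b + c`, then for all `v ∈ ℝ`, `r > 0`,
`ρ(v,r) = (c e^{-v²} cosh⁻²(r)(1/r - 2 tanh r) + ℋ₀(erf r + (r e^{-r²}/√π)(5/2 - r²)))
  / D(v,r) ≥ 0`, with `erf r = (2/√π)∫₀^r e^{-t²} dt` and
`D(v,r) = a - b tanh v + 2cv tanh r e^{-v²}`. -/
theorem stmt_14 (a b c H0 : ℝ) (h1 : 2 * c ≤ b) (h2 : 0 ≤ c) (h4 : c ≤ H0)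
    (h3 : b + c < a) :
    ∀ v r : ℝ, 0 < r →
      0 ≤ (c * Real.exp (-v^2) * ((Real.cosh r)^2)⁻¹ * (1 / r - 2 * Real.tanh r)
            + H0 * ((2 / Real.sqrt Real.pi) * (∫ t in (0:ℝ)..r, Real.exp (-t^2))
              + (r * Real.exp (-r^2) / Real.sqrt Real.pi) * (5 / 2 - r^2))) /
        (a - b * Real.tanh v + 2 * c * v * Real.tanh r * Real.exp (-v^2)) := by
  intro v r hr
  have hW0 : (0:ℝ) < Real.sqrt Real.pi := Real.sqrt_pos.2 Real.pi_pos
  have hS0 : (0:ℝ) < ((Real.cosh r)^2)⁻¹ := by positivity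
  have hXv0 : (0:ℝ) < Real.exp (-v^2) := Real.exp_pos _
  have hXv1 : Real.exp (-v^2) ≤ 1 := Real.exp_le_one_iff.2 (by nlinarith [sq_nonneg v])
  -- F ≥ 0
  have hF : 0 ≤ (2 / Real.sqrt Real.pi) * (∫ t in (0:ℝ)..r, Real.exp (-t^2))
      + (r * Real.exp (-r^2) / Real.sqrt Real.pi) * (5 / 2 - r^2) := by
    have h := aux14_keyA hr
    have heq : (2 / Real.sqrt Real.pi) * (∫ t in (0:ℝ)..r, Real.exp (-t^2))
        + (r * Real.exp (-r^2) / Real.sqrt Real.pi) * (5 / 2 - r^2)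
        = (2 * (∫ t in (0:ℝ)..r, Real.exp (-t^2))
            + r * Real.exp (-r^2) * (5/2 - r^2)) / Real.sqrt Real.pi := by
      field_simp
    rw [heq]
    exact div_nonneg h hW0.le
  -- G ≥ 0
  have hG : 0 ≤ ((Real.cosh r)^2)⁻¹ * (1 / r - 2 * Real.tanh r)
      + ((2 / Real.sqrt Real.pi) * (∫ t in (0:ℝ)..r, Real.exp (-t^2))
        + (r * Real.exp (-r^2) / Real.sqrt Real.pi) * (5 / 2 - r^2)) := by
    have h := aux14_keyB hr
    have heq : ((Real.cosh r)^2)⁻¹ * (1 / r - 2 * Real.tanh r)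
        + ((2 / Real.sqrt Real.pi) * (∫ t in (0:ℝ)..r, Real.exp (-t^2))
          + (r * Real.exp (-r^2) / Real.sqrt Real.pi) * (5 / 2 - r^2))
        = (2 * r * (∫ t in (0:ℝ)..r, Real.exp (-t^2)) + r^2 * Real.exp (-r^2) * (5/2 - r^2)
            + Real.sqrt Real.pi * (((Real.cosh r)^2)⁻¹ * (1 - 2 * r * Real.tanh r)))
          / (Real.sqrt Real.pi * r) := by
      field_simp
      ring
    rw [heq]
    exact div_nonneg h (by positivity)
  -- numerator
  have hnum : 0 ≤ c * Real.exp (-v^2) * ((Real.cosh r)^2)⁻¹ * (1 / r - 2 * Real.tanh r)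
      + H0 * ((2 / Real.sqrt Real.pi) * (∫ t in (0:ℝ)..r, Real.exp (-t^2))
        + (r * Real.exp (-r^2) / Real.sqrt Real.pi) * (5 / 2 - r^2)) := by
    have hsplit : c * Real.exp (-v^2) * ((Real.cosh r)^2)⁻¹ * (1 / r - 2 * Real.tanh r)
        + H0 * ((2 / Real.sqrt Real.pi) * (∫ t in (0:ℝ)..r, Real.exp (-t^2))
          + (r * Real.exp (-r^2) / Real.sqrt Real.pi) * (5 / 2 - r^2))
        = c * Real.exp (-v^2) * (((Real.cosh r)^2)⁻¹ * (1 / r - 2 * Real.tanh r)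
            + ((2 / Real.sqrt Real.pi) * (∫ t in (0:ℝ)..r, Real.exp (-t^2))
              + (r * Real.exp (-r^2) / Real.sqrt Real.pi) * (5 / 2 - r^2)))
          + (H0 - c * Real.exp (-v^2)) * ((2 / Real.sqrt Real.pi) * (∫ t in (0:ℝ)..r, Real.exp (-t^2))
              + (r * Real.exp (-r^2) / Real.sqrt Real.pi) * (5 / 2 - r^2)) := by
      ring
    rw [hsplit]
    have hc1 : 0 ≤ c * Real.exp (-v^2) := mul_nonneg h2 hXv0.le
    have hc2 : c * Real.exp (-v^2) ≤ H0 := by nlinarith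
    exact add_nonneg (mul_nonneg hc1 hG) (mul_nonneg (by linarith) hF)
  -- denominator
  have hden := aux14_denom a b c h1 h2 h3 v r hr
  exact div_nonneg hnum hden
end

section
/- Let a, b, c, ℋ₀ be real constants with b ≥ 2c, c > 0, ℋ₀ ≥ c and a > b + c, and define erf(r) := (2/√π)∫₀^r e^{−t²} dt. Fix v ∈ ℝ and define for r > 0: ρ(v,r) := ( c·e^{−v²}·cosh⁻²(r)·(1/r − 2·tanh(r)) + ℋ₀·( erf(r) + (r·e^{−r²}/√π)·(5/2 − r²) ) ) / D(v,r), where D(v,r) := a − b tanh(v) + 2 c v tanh(r) e^{−v²}. Then ρ(v,r) tends to +∞ as r → 0⁺. -/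
open Topology Filter

/-! Only the term `c e^{-v²} sech² r / r` of the numerator is singular at `r = 0`; everything
else in the numerator is continuous there, so the numerator tends to `+∞`. The denominator
tends to `a - b tanh v`, which is positive because `0 ≤ b < a` and `tanh v < 1`. -/

@[fun_prop]
theorem Real.continuous_tanh : Continuous Real.tanh := by
  simp only [funext Real.tanh_eq_sinh_div_cosh]
  exact Real.continuous_sinh.div Real.continuous_cosh fun x => (Real.cosh_pos x).ne'

theorem tendsto_mul_inv_add_nhdsGT_zero_atTop {f g : ℝ → ℝ} (hf : ContinuousAt f 0)
    (hf0 : 0 < f 0) (hg : ContinuousAt g 0) :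
    Tendsto (fun r => f r * r⁻¹ + g r) (𝓝[>] 0) atTop :=
  ((hf.tendsto.mono_left nhdsWithin_le_nhds).pos_mul_atTop hf0 tendsto_inv_nhdsGT_zero).atTop_add
    (hg.tendsto.mono_left nhdsWithin_le_nhds)

theorem sub_mul_tanh_pos {a b : ℝ} (hb : 0 ≤ b) (hba : b < a) (v : ℝ) :
    0 < a - b * Real.tanh v := by
  nlinarith [Real.tanh_lt_one v]

theorem stmt_15_general (a b c H0 : ℝ) (h1 : 2 * c ≤ b) (h2 : 0 < c)
    (h3 : b + c < a) (v : ℝ) :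
    Tendsto (fun r : ℝ =>
        (c * Real.exp (-v^2) * ((Real.cosh r)^2)⁻¹ * (1 / r - 2 * Real.tanh r)
          + H0 * ((2 / Real.sqrt Real.pi) * (∫ t in (0:ℝ)..r, Real.exp (-t^2))
            + (r * Real.exp (-r^2) / Real.sqrt Real.pi) * (5 / 2 - r^2))) /
        (a - b * Real.tanh v + 2 * c * v * Real.tanh r * Real.exp (-v^2)))
      (𝓝[>] (0 : ℝ)) atTop := by
  have hlimit_pos : 0 < a - b * Real.tanh v := sub_mul_tanh_pos (by linarith) (by linarith) v
  have hden : Tendsto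
      (fun r : ℝ => a - b * Real.tanh v + 2 * c * v * Real.tanh r * Real.exp (-v^2)) (𝓝[>] 0)
      (𝓝 (a - b * Real.tanh v)) := by
    have hcont : ContinuousAt
        (fun r : ℝ => a - b * Real.tanh v + 2 * c * v * Real.tanh r * Real.exp (-v^2)) 0 := by
      fun_prop
    simpa using hcont.tendsto.mono_left nhdsWithin_le_nhds
  have herf : Continuous fun r : ℝ => ∫ t in (0:ℝ)..r, Real.exp (-t^2) :=
    intervalIntegral.continuous_primitive (fun _ _ =>
      (by fun_prop : Continuous fun t : ℝ => Real.exp (-t^2)).intervalIntegrable _ _) 0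
  have hnum : Tendsto (fun r : ℝ =>
      c * Real.exp (-v^2) * ((Real.cosh r)^2)⁻¹ * (1 / r - 2 * Real.tanh r)
        + H0 * ((2 / Real.sqrt Real.pi) * (∫ t in (0:ℝ)..r, Real.exp (-t^2))
          + (r * Real.exp (-r^2) / Real.sqrt Real.pi) * (5 / 2 - r^2)))
      (𝓝[>] 0) atTop := by
    refine (tendsto_mul_inv_add_nhdsGT_zero_atTop
      (f := fun r => c * Real.exp (-v^2) * ((Real.cosh r)^2)⁻¹)
      (g := fun r => -(c * Real.exp (-v^2) * ((Real.cosh r)^2)⁻¹ * (2 * Real.tanh r))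
        + H0 * ((2 / Real.sqrt Real.pi) * (∫ t in (0:ℝ)..r, Real.exp (-t^2))
          + (r * Real.exp (-r^2) / Real.sqrt Real.pi) * (5 / 2 - r^2)))
      (by fun_prop (disch := positivity)) (by positivity)
      (by fun_prop (disch := positivity))).congr fun r => ?_
    ring
  simpa only [div_eq_mul_inv] using
    hnum.atTop_mul_pos (inv_pos.2 hlimit_pos) (hden.inv₀ hlimit_pos.ne')

/-- divergence of the energy density of the example shell at the
axis: with `b ≥ 2c`, `c > 0`, `ℋ₀ ≥ c`, `a > b + c` and `v ∈ ℝ` fixed,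
`ρ(v,r) → +∞` as `r → 0⁺`. -/
theorem stmt_15 (a b c H0 : ℝ) (h1 : 2 * c ≤ b) (h2 : 0 < c) (h4 : c ≤ H0)
    (h3 : b + c < a) (v : ℝ) :
    Tendsto (fun r : ℝ =>
        (c * Real.exp (-v^2) * ((Real.cosh r)^2)⁻¹ * (1 / r - 2 * Real.tanh r)
          + H0 * ((2 / Real.sqrt Real.pi) * (∫ t in (0:ℝ)..r, Real.exp (-t^2))
            + (r * Real.exp (-r^2) / Real.sqrt Real.pi) * (5 / 2 - r^2))) /
        (a - b * Real.tanh v + 2 * c * v * Real.tanh r * Real.exp (-v^2)))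
      (𝓝[>] (0 : ℝ)) atTop :=
  stmt_15_general a b c H0 h1 h2 h3 v
end
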